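/- arXiv:2106.01270 — 9 statements merged into one kernel-verified Lean document; each statement's English description precedes it below -/
import Mathlib

section
/- Let B be a commutative ring with a ℤ-grading 𝒜, and let f ∈ 𝒜 1 be a homogeneous element of degree 1. Then the ring homomorphism from the Laurent polynomial ring over the degree-zero homogeneous localization B₍f₎ (Mathlib's HomogeneousLocalization.Away 𝒜 f) to the localization B_f = Localization.Away f, which on coefficients is the canonical inclusion B₍f₎ → B_f and which sends the Laurent variable T to the image of f in B_f, is bijective, i.e. a ring isomorphism B₍f₎[T,T⁻¹] ≅ B_f. -/
/-!
The inverse map sends a homogeneous `b ∈ 𝒜 d` to `C (b / f ^ d) * T d`. Since the grading is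
multiplicative this defines a ring homomorphism `B → B₍f₎[T;T⁻¹]`, and it sends `f` to the unit
`T 1`, so it extends to `B_f`. The two composites are the identity: on `B_f` it suffices to check
this on homogeneous elements of `B`, on `B₍f₎[T;T⁻¹]` on the constants and on `T 1`.
-/

open LaurentPolynomial

namespace LaurentPolynomial

theorem ringHom_ext {R S : Type*} [CommSemiring R] [Semiring S] {φ ψ : R[T;T⁻¹] →+* S}
    (hC : ∀ a, φ (C a) = ψ (C a)) (hT : φ (T 1) = ψ (T 1)) : φ = ψ := by
  refine IsLocalization.ringHom_ext (Submonoid.powers (Polynomial.X : Polynomial R)) ?_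
  refine Polynomial.ringHom_ext (fun a => ?_) ?_
  · simpa [algebraMap_eq_toLaurent] using hC a
  · simpa [algebraMap_eq_toLaurent] using hT

theorem liftNCRingHom_eq_eval₂ {R S : Type*} [CommSemiring R] [CommSemiring S]
    (g : R →+* S) (x : Sˣ) :
    (AddMonoidAlgebra.liftNCRingHom g ((Units.coeHom S).comp (zpowersHom Sˣ x))
      (fun _ _ => Commute.all _ _) : R[T;T⁻¹] →+* S) = eval₂ g x := by
  refine ringHom_ext (fun a => ?_) ?_
  · rw [← single_eq_C, AddMonoidAlgebra.liftNCRingHom_single]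
    simp
  · rw [T, AddMonoidAlgebra.liftNCRingHom_single]
    simp

end LaurentPolynomial

namespace Localization.Away

variable {R : Type*} [CommSemiring R]

noncomputable abbrev unitSelf (f : R) : (Localization.Away f)ˣ :=
  (IsLocalization.Away.algebraMap_isUnit f).unit

theorem val_unitSelf (f : R) : (unitSelf f : Localization.Away f) = algebraMap R _ f :=
  IsUnit.unit_spec _

theorem mk_eq_algebraMap_mul_unitSelf_zpow (f a : R) (n : ℕ) :
    (Localization.mk a ⟨f ^ n, n, rfl⟩ : Localization.Away f) =
      algebraMap R _ a * ↑(unitSelf f ^ (-(n : ℤ))) := by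
  rw [Localization.mk_eq_mk', IsLocalization.mk'_eq_iff_eq_mul, mul_assoc, map_pow,
    ← val_unitSelf, ← Units.val_pow_eq_pow_val, ← Units.val_mul, ← zpow_natCast, ← zpow_add,
    neg_add_cancel, zpow_zero, Units.val_one, mul_one]

end Localization.Away

namespace HomogeneousLocalization.Away

open Localization.Away

variable {A σ : Type*} [CommRing A] [SetLike σ A] [AddSubgroupClass σ A]
  {𝒜 : ℤ → σ} [GradedRing 𝒜] {f : A}

-- `b / f ^ d`, as `(b * f ^ (-d).toNat) / f ^ d.toNat` since `Away.mk` takes natural powers.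
noncomputable def ofHomogeneous (hf : f ∈ 𝒜 1) {d : ℤ} (b : 𝒜 d) : Away 𝒜 f :=
  Away.mk 𝒜 hf d.toNat (b * f ^ (-d).toNat) <| by
    convert SetLike.mul_mem_graded b.2 (SetLike.pow_mem_graded (-d).toNat hf) using 2
    rw [nsmul_one, nsmul_one]
    omega

theorem val_ofHomogeneous (hf : f ∈ 𝒜 1) {d : ℤ} (b : 𝒜 d) :
    (ofHomogeneous hf b).val = algebraMap A _ b * ↑(unitSelf f ^ (-d)) := by
  rw [ofHomogeneous, Away.val_mk, mk_eq_algebraMap_mul_unitSelf_zpow, map_mul, map_pow,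
    ← val_unitSelf, ← Units.val_pow_eq_pow_val, mul_assoc, ← Units.val_mul, ← zpow_natCast,
    ← zpow_add]
  congr 4
  omega

theorem ofHomogeneous_zero (hf : f ∈ 𝒜 1) (d : ℤ) : ofHomogeneous hf (0 : 𝒜 d) = 0 := by
  ext
  simp [val_ofHomogeneous]

theorem ofHomogeneous_add (hf : f ∈ 𝒜 1) {d : ℤ} (b c : 𝒜 d) :
    ofHomogeneous hf (b + c) = ofHomogeneous hf b + ofHomogeneous hf c := by
  ext
  simp [val_ofHomogeneous, add_mul]

theorem ofHomogeneous_one (hf : f ∈ 𝒜 1) :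
    ofHomogeneous hf (⟨1, SetLike.one_mem_graded 𝒜⟩ : 𝒜 0) = 1 := by
  ext
  simp [val_ofHomogeneous]

theorem ofHomogeneous_mul (hf : f ∈ 𝒜 1) {i j : ℤ} (b : 𝒜 i) (c : 𝒜 j) :
    ofHomogeneous hf (⟨b * c, SetLike.mul_mem_graded b.2 c.2⟩ : 𝒜 (i + j)) =
      ofHomogeneous hf b * ofHomogeneous hf c := by
  ext
  simp only [val_mul, val_ofHomogeneous, map_mul, neg_add, zpow_add, Units.val_mul]
  ring

theorem ofHomogeneous_self (hf : f ∈ 𝒜 1) : ofHomogeneous hf (⟨f, hf⟩ : 𝒜 1) = 1 := by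
  ext
  rw [val_ofHomogeneous, val_one, ← val_unitSelf, zpow_neg_one, Units.mul_inv]

theorem ofHomogeneous_eq_mk (hf : f ∈ 𝒜 1) (n : ℕ) (a : A) (ha : a ∈ 𝒜 (n • 1)) :
    ofHomogeneous hf (⟨a, by simpa using ha⟩ : 𝒜 n) = Away.mk 𝒜 hf n a ha := by
  ext
  rw [val_ofHomogeneous, Away.val_mk, mk_eq_algebraMap_mul_unitSelf_zpow]

noncomputable def toLaurent (hf : f ∈ 𝒜 1) : A →+* (Away 𝒜 f)[T;T⁻¹] :=
  (DirectSum.toSemiring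
    (fun d =>
      { toFun := fun b => C (ofHomogeneous hf b) * T d
        map_zero' := by rw [ofHomogeneous_zero, map_zero, zero_mul]
        map_add' := fun b c => by rw [ofHomogeneous_add, map_add, add_mul] })
    ((congrArg (C · * T 0) (ofHomogeneous_one hf)).trans (by rw [map_one, one_mul, T_zero]))
    (fun b c => by
      simp only [AddMonoidHom.coe_mk, ZeroHom.coe_mk]
      rw [mul_mul_mul_comm, ← map_mul, ← ofHomogeneous_mul, T_add]
      rfl)).comp
  (DirectSum.decomposeRingEquiv 𝒜).toRingHom

theorem toLaurent_coe (hf : f ∈ 𝒜 1) {d : ℤ} (b : 𝒜 d) :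
    toLaurent hf (b : A) = C (ofHomogeneous hf b) * T d := by
  simp [toLaurent, DirectSum.decomposeRingEquiv]

theorem toLaurent_self (hf : f ∈ 𝒜 1) : toLaurent hf f = T 1 := by
  rw [toLaurent_coe hf (⟨f, hf⟩ : 𝒜 1), ofHomogeneous_self, map_one, one_mul]

theorem toLaurent_self_mul_T_neg_one (hf : f ∈ 𝒜 1) : toLaurent hf f * T (-1) = 1 := by
  rw [toLaurent_self, ← T_add, add_neg_cancel, T_zero]

theorem isUnit_toLaurent_self (hf : f ∈ 𝒜 1) : IsUnit (toLaurent hf f) :=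
  isUnit_iff_exists_inv.mpr ⟨T (-1), toLaurent_self_mul_T_neg_one hf⟩

noncomputable def localizationToLaurent (hf : f ∈ 𝒜 1) :
    Localization.Away f →+* (Away 𝒜 f)[T;T⁻¹] :=
  Localization.awayLift (toLaurent hf) f (isUnit_toLaurent_self hf)

theorem localizationToLaurent_algebraMap (hf : f ∈ 𝒜 1) (a : A) :
    localizationToLaurent hf (algebraMap A _ a) = toLaurent hf a :=
  IsLocalization.Away.lift_eq f (isUnit_toLaurent_self hf) a

theorem localizationToLaurent_mk (hf : f ∈ 𝒜 1) (a : A) (n : ℕ) :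
    localizationToLaurent hf (Localization.mk a ⟨f ^ n, n, rfl⟩) = toLaurent hf a * T (-n) := by
  rw [localizationToLaurent, Localization.awayLift_mk _ _ _ _ (toLaurent_self_mul_T_neg_one hf),
    T_pow, mul_neg_one]

variable (𝒜 f) in
noncomputable abbrev laurentToLocalization : (Away 𝒜 f)[T;T⁻¹] →+* Localization.Away f :=
  eval₂ (algebraMap (Away 𝒜 f) (Localization.Away f)) (unitSelf f)

theorem laurentToLocalization_comp_toLaurent (hf : f ∈ 𝒜 1) :
    (laurentToLocalization 𝒜 f).comp (toLaurent hf) = algebraMap A _ := by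
  ext a
  induction a using DirectSum.Decomposition.inductionOn 𝒜 with
  | zero => simp
  | homogeneous b =>
    rw [RingHom.comp_apply, toLaurent_coe, eval₂_C_mul_T, algebraMap_apply, val_ofHomogeneous,
      mul_assoc, ← Units.val_mul, ← zpow_add, neg_add_cancel, zpow_zero, Units.val_one, mul_one]
  | add a b ha hb => rw [map_add, ha, hb, map_add]

theorem laurentToLocalization_comp_localizationToLaurent (hf : f ∈ 𝒜 1) :
    (laurentToLocalization 𝒜 f).comp (localizationToLaurent hf) = RingHom.id _ := by
  refine IsLocalization.ringHom_ext (Submonoid.powers f) (RingHom.ext fun a => ?_)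
  simp only [RingHom.comp_apply, localizationToLaurent_algebraMap, RingHom.id_apply]
  exact RingHom.congr_fun (laurentToLocalization_comp_toLaurent hf) a

theorem localizationToLaurent_val (hf : f ∈ 𝒜 1) (r : Away 𝒜 f) :
    localizationToLaurent hf r.val = C r := by
  obtain ⟨n, a, ha, rfl⟩ := Away.mk_surjective 𝒜 hf r
  rw [Away.val_mk, localizationToLaurent_mk, toLaurent_coe hf (⟨a, by simpa using ha⟩ : 𝒜 n),
    mul_assoc, ← T_add, add_neg_cancel, T_zero, mul_one, ofHomogeneous_eq_mk]

theorem localizationToLaurent_comp_laurentToLocalization (hf : f ∈ 𝒜 1) :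
    (localizationToLaurent hf).comp (laurentToLocalization 𝒜 f) = RingHom.id _ := by
  refine LaurentPolynomial.ringHom_ext (fun r => ?_) ?_
  · rw [RingHom.comp_apply, eval₂_C, algebraMap_apply, localizationToLaurent_val, RingHom.id_apply]
  · rw [RingHom.comp_apply, eval₂_T, zpow_one, val_unitSelf, localizationToLaurent_algebraMap,
      toLaurent_self, RingHom.id_apply]

noncomputable def laurentEquiv (hf : f ∈ 𝒜 1) : (Away 𝒜 f)[T;T⁻¹] ≃+* Localization.Away f :=
  RingEquiv.ofRingHom (laurentToLocalization 𝒜 f) (localizationToLaurent hf)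
    (laurentToLocalization_comp_localizationToLaurent hf)
    (localizationToLaurent_comp_laurentToLocalization hf)

end HomogeneousLocalization.Away

/-- For a ℤ-graded commutative ring `B` and a homogeneous element `f` of
degree 1, the ring homomorphism from the Laurent polynomial ring over the degree-zero
homogeneous localization `B₍f₎` to the localization `B_f`, which on coefficients is the
canonical inclusion `B₍f₎ → B_f` and which sends the Laurent variable `T` to the image
of `f` in `B_f`, is bijective. -/
theorem laurent_homogeneousLocalization_bijective_to_away
    (B : Type) [CommRing B] (𝒜 : ℤ → Submodule ℤ B) [GradedRing 𝒜]
    (f : B) (hf : f ∈ 𝒜 1) :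
    Function.Bijective
      (AddMonoidAlgebra.liftNCRingHom
        (algebraMap (HomogeneousLocalization.Away 𝒜 f) (Localization.Away f))
        ((Units.coeHom (Localization.Away f)).comp
          (zpowersHom (Localization.Away f)ˣ
            (IsLocalization.Away.algebraMap_isUnit (S := Localization.Away f) f).unit))
        (fun _ _ => Commute.all _ _) :
        LaurentPolynomial (HomogeneousLocalization.Away 𝒜 f) →+* Localization.Away f) := by
  rw [LaurentPolynomial.liftNCRingHom_eq_eval₂]
  exact (HomogeneousLocalization.Away.laurentEquiv hf).bijective
end

section
/- Let B be a commutative ring with a ℤ-grading 𝒜, and let f ∈ 𝒜 1 be a homogeneous element of degree 1. For each n ∈ ℤ, let Lₙ ⊆ Localization.Away f be the additive subgroup of all elements of the form m/fᵏ with k ∈ ℕ and m ∈ 𝒜 (n+k). Then the family (Lₙ)_{n∈ℤ} is a ℤ-grading of the localization: Localization.Away f is the internal direct sum of the Lₙ, 1 ∈ L₀, and Lₘ·Lₙ ⊆ L_{m+n}. -/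
/-- For a ℤ-graded ring `B` and `f` homogeneous of degree 1, the degree-`n` part of the
localization `B_f`: elements of the form `m / fᵏ` with `m` homogeneous of degree `n + k`. -/
noncomputable def awayGrading (B : Type) [CommRing B] (𝒜 : ℤ → AddSubgroup B)
    [GradedRing 𝒜] (f : B) (hf : f ∈ 𝒜 1) (n : ℤ) :
    AddSubgroup (Localization.Away f) where
  carrier := { x | ∃ (k : ℕ) (m : B), m ∈ 𝒜 (n + k) ∧
    x = Localization.mk m (⟨f ^ k, ⟨k, rfl⟩⟩ : Submonoid.powers f) }
  zero_mem' := ⟨0, 0, zero_mem _, (Localization.mk_zero _).symm⟩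
  add_mem' := by
    rintro x y ⟨k₁, m₁, hm₁, rfl⟩ ⟨k₂, m₂, hm₂, rfl⟩
    refine ⟨k₁ + k₂, f ^ k₁ * m₂ + f ^ k₂ * m₁, ?_, ?_⟩
    · have h1 : f ^ k₁ * m₂ ∈ 𝒜 (n + ((k₁ + k₂ : ℕ) : ℤ)) := by
        have := SetLike.mul_mem_graded (SetLike.pow_mem_graded k₁ hf) hm₂
        have e : (k₁ • (1:ℤ)) + (n + (k₂:ℤ)) = n + ((k₁ + k₂ : ℕ) : ℤ) := by push_cast; ring
        rwa [e] at this
      have h2 : f ^ k₂ * m₁ ∈ 𝒜 (n + ((k₁ + k₂ : ℕ) : ℤ)) := by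
        have := SetLike.mul_mem_graded (SetLike.pow_mem_graded k₂ hf) hm₁
        have e : (k₂ • (1:ℤ)) + (n + (k₁:ℤ)) = n + ((k₁ + k₂ : ℕ) : ℤ) := by push_cast; ring
        rwa [e] at this
      exact add_mem h1 h2
    · rw [Localization.add_mk]
      congr 1
      exact Subtype.ext (pow_add f k₁ k₂).symm
  neg_mem' := by
    rintro x ⟨k, m, hm, rfl⟩
    exact ⟨k, -m, neg_mem hm, by rw [Localization.neg_mk]⟩

section Aux

variable {B : Type} [CommRing B]

lemma mk_bump (f : B) (m : B) (k j l : ℕ) (h : l = j + k) :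
    (Localization.mk m (⟨f ^ k, ⟨k, rfl⟩⟩ : Submonoid.powers f) : Localization.Away f)
      = Localization.mk (f ^ j * m) (⟨f ^ l, ⟨l, rfl⟩⟩ : Submonoid.powers f) := by
  subst h
  rw [Localization.mk_eq_mk_iff, Localization.r_iff_exists]
  exact ⟨1, by simp [pow_add]; ring⟩

lemma mk_zero_exists (f : B) (m : B) (K : ℕ)
    (h : (Localization.mk m (⟨f ^ K, ⟨K, rfl⟩⟩ : Submonoid.powers f) : Localization.Away f) = 0) :
    ∃ l : ℕ, f ^ l * m = 0 := by
  rw [show (0 : Localization.Away f) = Localization.mk 0 1 from (Localization.mk_zero 1).symm,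
    Localization.mk_eq_mk_iff, Localization.r_iff_exists] at h
  obtain ⟨c, hc⟩ := h
  obtain ⟨l, hl⟩ := c.2
  exact ⟨l, by simpa [← hl] using hc⟩

lemma common_denom (𝒜 : ℤ → AddSubgroup B) [GradedRing 𝒜] (f : B) (hf : f ∈ 𝒜 1)
    (s : Finset ℤ) (g : ℤ → Localization.Away f)
    (hg : ∀ n ∈ s, ∃ (k : ℕ) (m : B), m ∈ 𝒜 (n + k) ∧
      g n = Localization.mk m (⟨f ^ k, ⟨k, rfl⟩⟩ : Submonoid.powers f)) :
    ∃ (K : ℕ) (M : ℤ → B), ∀ n ∈ s, M n ∈ 𝒜 (n + K) ∧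
      g n = Localization.mk (M n) (⟨f ^ K, ⟨K, rfl⟩⟩ : Submonoid.powers f) := by
  classical
  induction s using Finset.induction_on with
  | empty => exact ⟨0, 0, by simp⟩
  | @insert a s' ha ih =>
    obtain ⟨K, M, hKM⟩ := ih (fun n hn => hg n (Finset.mem_insert_of_mem hn))
    obtain ⟨k, m, hm, hga⟩ := hg a (Finset.mem_insert_self a s')
    refine ⟨k + K, fun n => if n = a then f ^ K * m else f ^ k * M n, ?_⟩
    intro n hn
    rcases Finset.mem_insert.mp hn with rfl | hn'
    · simp only [if_pos rfl]
      constructor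
      · have := SetLike.mul_mem_graded (SetLike.pow_mem_graded K hf) hm
        have e : (K • (1:ℤ)) + (n + (k:ℤ)) = n + ((k + K : ℕ) : ℤ) := by push_cast; ring
        rwa [e] at this
      · rw [hga]; exact mk_bump f m k K (k + K) (by ring)
    · have hne : n ≠ a := by rintro rfl; exact ha hn'
      simp only [if_neg hne]
      obtain ⟨hmem, hgn⟩ := hKM n hn'
      constructor
      · have := SetLike.mul_mem_graded (SetLike.pow_mem_graded k hf) hmem
        have e : (k • (1:ℤ)) + (n + (K:ℤ)) = n + ((k + K : ℕ) : ℤ) := by push_cast; ring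
        rwa [e] at this
      · rw [hgn]; exact mk_bump f (M n) K k (k + K) rfl

lemma homog_sum_zero (𝒜 : ℤ → AddSubgroup B) [GradedRing 𝒜]
    (s : Finset ℤ) (d : ℤ → ℤ) (hd : ∀ n ∈ s, ∀ n' ∈ s, d n = d n' → n = n')
    (M : ℤ → B) (hM : ∀ n ∈ s, M n ∈ 𝒜 (d n)) (h : ∑ n ∈ s, M n = 0) :
    ∀ n ∈ s, M n = 0 := by
  intro n₀ hn₀
  have h1 := congrArg (fun b => ((DirectSum.decompose 𝒜 b) (d n₀) : B)) h
  simp only [DirectSum.decompose_sum, DirectSum.decompose_zero, DirectSum.zero_apply,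
    ZeroMemClass.coe_zero] at h1
  rw [DFinsupp.finset_sum_apply, AddSubmonoidClass.coe_finset_sum] at h1
  rwa [Finset.sum_eq_single n₀
    (fun n hn hne => DirectSum.decompose_of_mem_ne 𝒜 (hM n hn)
      (fun hdd => hne (hd n hn n₀ hn₀ hdd)))
    (fun h' => absurd hn₀ h'),
    DirectSum.decompose_of_mem_same 𝒜 (hM n₀ hn₀)] at h1

end Aux

/-- if `B` is a ℤ-graded commutative ring and `f` is homogeneous of degree 1,
then the subgroups `Lₙ = { m/fᵏ : m ∈ 𝒜 (n+k) }` form a ℤ-grading of `Localization.Away f`: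
the localization is their internal direct sum, `1 ∈ L₀`, and `Lₘ · Lₙ ⊆ L_{m+n}`. -/
theorem awayGrading_is_grading (B : Type) [CommRing B] (𝒜 : ℤ → AddSubgroup B)
    [GradedRing 𝒜] (f : B) (hf : f ∈ 𝒜 1) :
    DirectSum.IsInternal (awayGrading B 𝒜 f hf) ∧
    (1 : Localization.Away f) ∈ awayGrading B 𝒜 f hf 0 ∧
    (∀ (m n : ℤ) (x y : Localization.Away f),
      x ∈ awayGrading B 𝒜 f hf m → y ∈ awayGrading B 𝒜 f hf n →
        x * y ∈ awayGrading B 𝒜 f hf (m + n)) := by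
  classical
  refine ⟨⟨?_, ?_⟩, ?_, ?_⟩
  · -- injectivity
    rw [injective_iff_map_eq_zero]
    intro x hx
    have hxe : (DirectSum.coeAddMonoidHom (awayGrading B 𝒜 f hf)) x
        = ∑ n ∈ DFinsupp.support x, ((x n : Localization.Away f)) := by
      conv_lhs => rw [← DirectSum.sum_support_of x]
      rw [map_sum]
      simp [DirectSum.coeAddMonoidHom_of]
    obtain ⟨K, M, hKM⟩ := common_denom 𝒜 f hf x.support (fun n => (x n : Localization.Away f))
      (fun n _ => (x n).2)
    have hsum : (Localization.mk (∑ n ∈ x.support, M n)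
        (⟨f ^ K, ⟨K, rfl⟩⟩ : Submonoid.powers f) : Localization.Away f) = 0 := by
      rw [Localization.mk_sum]
      rw [← Finset.sum_congr rfl (fun n hn => (hKM n hn).2), ← hxe, hx]
    obtain ⟨l, hl⟩ := mk_zero_exists f _ K hsum
    rw [Finset.mul_sum] at hl
    have hz : ∀ n ∈ x.support, f ^ l * M n = 0 := by
      refine homog_sum_zero 𝒜 x.support (fun n => (l : ℤ) + (n + K)) ?_ _ ?_ hl
      · intro n _ n' _ h; omega
      · intro n hn
        have := SetLike.mul_mem_graded (SetLike.pow_mem_graded l hf) (hKM n hn).1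
        rwa [show (l • (1:ℤ)) = (l:ℤ) by simp] at this
    have hxn : ∀ n, x n = 0 := by
      intro n
      by_cases hn : n ∈ x.support
      · have : ((x n : Localization.Away f)) = 0 := by
          rw [(hKM n hn).2, mk_bump f (M n) K l (l + K) rfl, hz n hn, Localization.mk_zero]
        exact Subtype.ext this
      · exact DFinsupp.notMem_support_iff.mp hn
    exact DFinsupp.ext hxn
  · -- surjectivity
    intro z
    obtain ⟨⟨r, u⟩, rfl⟩ : ∃ p : B × Submonoid.powers f, Localization.mk p.1 p.2 = z := by
      induction z using Localization.induction_on with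
      | H p => exact ⟨p, rfl⟩
    obtain ⟨k, hk⟩ := u.2
    have hu : u = (⟨f ^ k, ⟨k, rfl⟩⟩ : Submonoid.powers f) := Subtype.ext hk.symm
    subst hu
    refine ⟨∑ i ∈ (DirectSum.decompose 𝒜 r).support,
      DirectSum.of (fun n => (awayGrading B 𝒜 f hf n)) (i - k)
        ⟨Localization.mk (DirectSum.decompose 𝒜 r i : B)
          (⟨f ^ k, ⟨k, rfl⟩⟩ : Submonoid.powers f),
          k, (DirectSum.decompose 𝒜 r i : B), ?_, rfl⟩, ?_⟩
    · have e : (i - (k:ℤ)) + (k:ℤ) = i := by ring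
      rw [e]
      exact SetLike.coe_mem _
    · rw [map_sum]
      simp only [DirectSum.coeAddMonoidHom_of]
      rw [← Localization.mk_sum]
      congr 1
      exact DirectSum.sum_support_decompose 𝒜 r
  · -- one
    refine ⟨0, 1, by simpa using SetLike.one_mem_graded 𝒜, ?_⟩
    rw [show (⟨f ^ 0, ⟨0, rfl⟩⟩ : Submonoid.powers f) = 1 from Subtype.ext (pow_zero f)]
    rw [Localization.mk_one_eq_algebraMap, map_one]
  · -- mul
    rintro m n x y ⟨k₁, m₁, hm₁, rfl⟩ ⟨k₂, m₂, hm₂, rfl⟩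
    refine ⟨k₁ + k₂, m₁ * m₂, ?_, ?_⟩
    · have := SetLike.mul_mem_graded hm₁ hm₂
      have e : (m + (k₁:ℤ)) + (n + (k₂:ℤ)) = (m + n) + ((k₁ + k₂ : ℕ) : ℤ) := by push_cast; ring
      rwa [e] at this
    · rw [Localization.mk_mul]
      congr 1
      exact Subtype.ext (pow_add f k₁ k₂).symm
end

section
/- Let A be a nontrivial commutative ring and let a₁, …, aₙ be a regular sequence in A. Then in the polynomial ring A[v₁, …, vₙ, s] in n+1 variables, the sequence v₁·s − a₁, …, vₙ·s − aₙ is a regular sequence. -/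
/-!
Write `s = X none`, `fᵢ = vᵢ s - aᵢ` and `Jₖ = (f₀, …, fₖ₋₁)`; the heart of the proof is that `s`
is a non-zero-divisor modulo every `Jₖ`, by induction on `k`. Neither `Jₖ` nor `s` involves `vₖ`,
so modulo `Jₖ` the relation `fₖ` is a linear polynomial in `vₖ` with regular leading coefficient
`s`, hence regular. Modulo `Jₖ + (s) = (s, a₀, …, aₖ₋₁)` it becomes `-aₖ`, which is regular there
because `a` is a regular sequence. Exchanging the roles of `s` and `fₖ` (if `x` is regular on `M`
and `y` on `M/xM`, then `x` is regular on `M/yM`) shows that `s` is regular modulo `Jₖ₊₁`.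
-/

open MvPolynomial
open scoped nonZeroDivisors

theorem IsSMulRegular.neg {R M : Type*} [Ring R] [AddCommGroup M] [Module R M] {r : R}
    (h : IsSMulRegular M r) : IsSMulRegular M (-r) :=
  fun x y hxy => h (by simpa only [neg_smul, neg_inj] using hxy)

section Quotient

variable {R : Type*} [CommRing R]

theorem Ideal.isSMulRegular_quotient_span_singleton_sup_swap {I : Ideal R} {x y : R}
    (hx : IsSMulRegular (R ⧸ I) x) (hy : IsSMulRegular (R ⧸ (Ideal.span {x} ⊔ I)) y) :
    IsSMulRegular (R ⧸ (Ideal.span {y} ⊔ I)) x := by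
  simp only [isSMulRegular_quotient_iff_mem_of_smul_mem, smul_eq_mul] at *
  intro z hz
  obtain ⟨w, i, hi, hxz⟩ := Ideal.mem_span_singleton_sup.1 hz
  have hw : w ∈ Ideal.span {x} ⊔ I :=
    hy w <| Ideal.mem_span_singleton_sup.2 ⟨z, -i, I.neg_mem hi, by linear_combination -hxz⟩
  obtain ⟨u, i', hi', rfl⟩ := Ideal.mem_span_singleton_sup.1 hw
  have hz' : z - u * y ∈ I := hx _ <| by
    convert I.add_mem (I.mul_mem_right y hi') hi using 1
    linear_combination -hxz
  exact Ideal.mem_span_singleton_sup.2 ⟨u, _, hz', by ring⟩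

theorem Ideal.isSMulRegular_quotient_of_retraction {K L : Ideal R} (ρ : R →+* R)
    (hρ : ∀ z, z - ρ z ∈ K) (hKL : K.map ρ ≤ L) (hLK : L ≤ K) {y : R}
    (hy : IsSMulRegular (R ⧸ L) (ρ y)) : IsSMulRegular (R ⧸ K) y := by
  simp only [isSMulRegular_quotient_iff_mem_of_smul_mem, smul_eq_mul] at *
  intro z hz
  have hρz : ρ z ∈ L := hy _ <| hKL <| by
    simpa only [map_mul] using Ideal.mem_map_of_mem ρ hz
  simpa using K.add_mem (hρ z) (hLK hρz)

theorem Polynomial.isSMulRegular_quotient_map_C_X_mul_C_sub_C {I : Ideal R} {s : R} (a : R)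
    (hs : IsSMulRegular (R ⧸ I) s) :
    IsSMulRegular (Polynomial R ⧸ I.map Polynomial.C)
      (Polynomial.X * Polynomial.C s - Polynomial.C a) := by
  simp only [isSMulRegular_quotient_iff_mem_of_smul_mem, smul_eq_mul] at *
  intro p hp
  rw [← Ideal.mk_ker (I := I), ← Polynomial.ker_mapRingHom, RingHom.mem_ker] at hp ⊢
  have hs' : Ideal.Quotient.mk I s ∈ (R ⧸ I)⁰ := by
    refine mem_nonZeroDivisors_iff_left.2 fun z hz => ?_
    obtain ⟨z, rfl⟩ := Ideal.Quotient.mk_surjective z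
    rw [← map_mul, Ideal.Quotient.eq_zero_iff_mem] at hz
    exact Ideal.Quotient.eq_zero_iff_mem.2 (hs z hz)
  have hreg : Polynomial.mapRingHom (Ideal.Quotient.mk I)
      (Polynomial.X * Polynomial.C s - Polynomial.C a) ∈ (Polynomial (R ⧸ I))⁰ :=
    Polynomial.mem_nonzeroDivisors_of_coeff_mem 1 (by simpa using hs')
  rw [map_mul] at hp
  exact mem_nonZeroDivisors_iff_left.1 hreg _ hp

theorem MvPolynomial.isSMulRegular_quotient_map_C {σ : Type*} {I : Ideal R} {r : R}
    (hr : IsSMulRegular (R ⧸ I) r) :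
    IsSMulRegular (MvPolynomial σ R ⧸ I.map (C : R →+* MvPolynomial σ R))
      (C r : MvPolynomial σ R) := by
  simp only [isSMulRegular_quotient_iff_mem_of_smul_mem, smul_eq_mul, mem_map_C_iff] at *
  intro p hp m
  exact hr _ (by simpa only [coeff_C_mul] using hp m)

theorem MvPolynomial.isSMulRegular_quotient_X_mul_sub {σ : Type*} (i : σ)
    {G : Set (MvPolynomial σ R)} (hG : ∀ g ∈ G, i ∉ g.vars) {s : MvPolynomial σ R}
    (a : MvPolynomial σ R) (hsi : i ∉ s.vars) (hai : i ∉ a.vars)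
    (hs : IsSMulRegular (MvPolynomial σ R ⧸ Ideal.span G) s) :
    IsSMulRegular (MvPolynomial σ R ⧸ Ideal.span G) (X i * s - a) := by
  classical
  -- `φ` reads a polynomial as a polynomial in `X i`; evaluating at `X i` undoes it.
  let φ : MvPolynomial σ R →+* Polynomial (MvPolynomial σ R) :=
    eval₂Hom (Polynomial.C.comp C) fun j => if j = i then Polynomial.X else Polynomial.C (X j)
  have hφC : ∀ g : MvPolynomial σ R, i ∉ g.vars → φ g = Polynomial.C g := fun g hg =>
    hom_congr_vars (by ext; simp [φ]) (fun j hj _ => by simp [φ, ne_of_mem_of_not_mem hj hg])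
      rfl
  have hφX : φ (X i) = Polynomial.X := by simp [φ]
  have hevalφ : (Polynomial.evalRingHom (X i)).comp φ = RingHom.id _ :=
    ringHom_ext (by simp [φ]) fun j => by by_cases hj : j = i <;> simp [φ, hj]
  have hevalC : (Polynomial.evalRingHom (X i : MvPolynomial σ R)).comp Polynomial.C =
      RingHom.id _ :=
    RingHom.ext fun _ => Polynomial.eval_C
  have hφG : (Ideal.span G).map φ = (Ideal.span G).map Polynomial.C := by
    rw [Ideal.map_span, Ideal.map_span]
    exact congrArg _ (Set.image_congr fun g hg => hφC g (hG g hg))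
  rw [isSMulRegular_quotient_iff_mem_of_smul_mem]
  intro z hz
  have hφz : φ z ∈ (Ideal.span G).map Polynomial.C := by
    refine mem_of_isSMulRegular_quotient_of_smul_mem
      (Polynomial.isSMulRegular_quotient_map_C_X_mul_C_sub_C a hs) ?_
    rw [smul_eq_mul]
    have := Ideal.mem_map_of_mem φ hz
    rwa [hφG, smul_eq_mul, map_mul, map_sub, map_mul, hφX, hφC s hsi, hφC a hai] at this
  have := Ideal.mem_map_of_mem (Polynomial.evalRingHom (X i)) hφz
  rwa [Ideal.map_map, hevalC, Ideal.map_id, ← RingHom.comp_apply, hevalφ] at this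

end Quotient

section PrefixIdeal

variable {R : Type*} {n : ℕ}

noncomputable def prefixIdeal [Semiring R] (g : Fin n → R) (k : ℕ) : Ideal R :=
  Ideal.span (g '' {i | (i : ℕ) < k})

theorem prefixIdeal_succ [Semiring R] (g : Fin n → R) (i : Fin n) :
    prefixIdeal g (i + 1) = Ideal.span {g i} ⊔ prefixIdeal g i := by
  rw [prefixIdeal, prefixIdeal, ← Ideal.span_insert, ← Set.image_insert_eq]
  congr 2
  ext j
  simp only [Set.mem_insert_iff, Set.mem_ofPred_eq, Fin.ext_iff]
  omega

theorem map_prefixIdeal {S : Type*} [Semiring R] [Semiring S] (φ : R →+* S) (g : Fin n → R)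
    (k : ℕ) : (prefixIdeal g k).map φ = prefixIdeal (φ ∘ g) k := by
  rw [prefixIdeal, prefixIdeal, Ideal.map_span, Set.image_comp]

theorem Ideal.ofList_take_ofFn [Semiring R] (g : Fin n → R) (k : ℕ) :
    Ideal.ofList ((List.ofFn g).take k) = prefixIdeal g k := by
  refine congrArg Ideal.span (Set.ext fun r => ?_)
  simp only [Set.mem_ofPred_eq, List.mem_take_iff_getElem, List.length_ofFn, lt_min_iff,
    List.getElem_ofFn, Set.mem_image]
  exact ⟨fun ⟨j, ⟨hk, hn⟩, hr⟩ => ⟨⟨j, hn⟩, hk, hr⟩, fun ⟨j, hk, hr⟩ => ⟨j, ⟨hk, j.2⟩, hr⟩⟩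

theorem RingTheory.Sequence.isWeaklyRegular_ofFn_iff [CommRing R] (g : Fin n → R) :
    IsWeaklyRegular R (List.ofFn g) ↔ ∀ i : Fin n, IsSMulRegular (R ⧸ prefixIdeal g i) (g i) := by
  rw [isWeaklyRegular_iff_Fin]
  refine (finCongr List.length_ofFn).forall_congr fun i => ?_
  rw [Ideal.ofList_take_ofFn, smul_eq_mul, Ideal.mul_top]
  simp only [Fin.getElem_fin, List.getElem_ofFn, finCongr_apply_coe, finCongr_apply]
  rfl

end PrefixIdeal

section Rees

variable {A : Type*} [CommRing A] {n : ℕ} (a : Fin n → A)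

/-- `vᵢ s - aᵢ`, where `vᵢ = X (some i)` and `s = X none`. -/
noncomputable def reesRelation (i : Fin n) : MvPolynomial (Option (Fin n)) A :=
  X (some i) * X none - C (a i)

theorem vars_reesRelation_subset [Nontrivial A] (i : Fin n) :
    (reesRelation a i).vars ⊆ {some i, none} := by
  classical
  refine (vars_sub_subset _).trans (Finset.union_subset ((vars_mul _ _).trans ?_) (by simp))
  simp [vars_X]

theorem isSMulRegular_reesRelation [Nontrivial A] (i : Fin n)
    (hs : IsSMulRegular (MvPolynomial (Option (Fin n)) A ⧸ prefixIdeal (reesRelation a) i)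
      (X none : MvPolynomial (Option (Fin n)) A)) :
    IsSMulRegular (MvPolynomial (Option (Fin n)) A ⧸ prefixIdeal (reesRelation a) i)
      (reesRelation a i) := by
  refine isSMulRegular_quotient_X_mul_sub (some i) ?_ _ (by simp [vars_X]) (by simp [vars_C]) hs
  rintro _ ⟨j, hj, rfl⟩ hi
  have := vars_reesRelation_subset a j hi
  simp only [Finset.mem_insert, Finset.mem_singleton, Option.some.injEq, reduceCtorEq,
    or_false] at this
  exact (ne_of_lt hj).symm (congrArg Fin.val this)

theorem isSMulRegular_reesRelation_mod_X_none (i : Fin n)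
    (ha : IsSMulRegular (A ⧸ prefixIdeal a i) (a i)) :
    IsSMulRegular (MvPolynomial (Option (Fin n)) A ⧸
      (Ideal.span {X none} ⊔ prefixIdeal (reesRelation a) i)) (reesRelation a i) := by
  let ρ : MvPolynomial (Option (Fin n)) A →+* MvPolynomial (Option (Fin n)) A :=
    (aeval fun t : Option (Fin n) => t.elim 0 (X ∘ some)).toRingHom
  have hρ_rel (j : Fin n) : ρ (reesRelation a j) = C (-a j) := by simp [ρ, reesRelation]
  refine Ideal.isSMulRegular_quotient_of_retraction ρ (L := prefixIdeal (C ∘ a) i) ?_ ?_ ?_ ?_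
  · intro z
    refine Ideal.mem_sup_left (Ideal.Quotient.eq.1 ?_)
    suffices (Ideal.Quotient.mk _).comp ρ = Ideal.Quotient.mk (Ideal.span {X none}) from
      (RingHom.congr_fun this z).symm
    refine ringHom_ext (fun r => by simp [ρ]) fun t => ?_
    cases t with
    | none => simp [ρ]
    | some j => simp [ρ]
  · rw [Ideal.map_sup, Ideal.map_span, prefixIdeal, Ideal.map_span, sup_le_iff, Ideal.span_le,
      Ideal.span_le]
    refine ⟨by simp [ρ], ?_⟩
    rintro _ ⟨_, ⟨j, hj, rfl⟩, rfl⟩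
    rw [hρ_rel, map_neg]
    exact neg_mem (Ideal.subset_span ⟨j, hj, rfl⟩)
  · refine Ideal.span_le.2 ?_
    rintro _ ⟨j, hj, rfl⟩
    have hCa : C (a j) = X (some j) * X none - reesRelation a j := by simp [reesRelation]
    rw [Function.comp_apply, hCa]
    exact sub_mem (Ideal.mem_sup_left (Ideal.mul_mem_left _ _ (Ideal.mem_span_singleton_self _)))
      (Ideal.mem_sup_right (Ideal.subset_span ⟨j, hj, rfl⟩))
  · rw [hρ_rel, ← map_prefixIdeal]
    exact isSMulRegular_quotient_map_C ha.neg

theorem isSMulRegular_X_none_mod_prefixIdeal_reesRelation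
    (ha : ∀ i : Fin n, IsSMulRegular (A ⧸ prefixIdeal a i) (a i)) :
    ∀ k ≤ n, IsSMulRegular (MvPolynomial (Option (Fin n)) A ⧸ prefixIdeal (reesRelation a) k)
      (X none : MvPolynomial (Option (Fin n)) A)
  | 0, _ => by
    rw [isSMulRegular_quotient_iff_mem_of_smul_mem]
    intro z hz
    simpa [prefixIdeal] using hz
  | k + 1, hk => by
    rw [show k + 1 = ((⟨k, hk⟩ : Fin n) : ℕ) + 1 from rfl, prefixIdeal_succ]
    exact Ideal.isSMulRegular_quotient_span_singleton_sup_swap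
      (isSMulRegular_X_none_mod_prefixIdeal_reesRelation ha k (Nat.le_of_succ_le hk))
      (isSMulRegular_reesRelation_mod_X_none a ⟨k, hk⟩ (ha _))

theorem ofList_reesRelation_ne_top [Nontrivial A] :
    Ideal.ofList (List.ofFn (reesRelation a)) ≠ ⊤ := by
  let ε : MvPolynomial (Option (Fin n)) A →ₐ[A] A := aeval fun t => t.elim 1 a
  have hle : Ideal.ofList (List.ofFn (reesRelation a)) ≤ RingHom.ker ε := by
    refine Ideal.span_le.2 fun r hr => ?_
    obtain ⟨i, rfl⟩ := List.mem_ofFn.1 hr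
    simp [ε, reesRelation]
  intro htop
  simpa using hle (htop ▸ Submodule.mem_top : (1 : MvPolynomial (Option (Fin n)) A) ∈ _)

end Rees

/-- if `a₁, …, aₙ` is a regular sequence in a nontrivial commutative ring `A`,
then in the polynomial ring `A[v₁, …, vₙ, s]` (variables indexed by `Option (Fin n)`, with
`X (some i) = vᵢ` and `X none = s`) the sequence `v₁·s − a₁, …, vₙ·s − aₙ` is a regular
sequence. -/
theorem regular_sequence_vs_sub_a
    (A : Type) [CommRing A] [Nontrivial A] (n : ℕ) (a : Fin n → A)
    (ha : RingTheory.Sequence.IsRegular A (List.ofFn a)) :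
    RingTheory.Sequence.IsRegular (MvPolynomial (Option (Fin n)) A)
      (List.ofFn fun i : Fin n =>
        (X (some i) * X none - C (a i) : MvPolynomial (Option (Fin n)) A)) := by
  have hreg := (RingTheory.Sequence.isWeaklyRegular_ofFn_iff a).1 ha.toIsWeaklyRegular
  refine ⟨(RingTheory.Sequence.isWeaklyRegular_ofFn_iff (reesRelation a)).2 fun i =>
    isSMulRegular_reesRelation a i
      (isSMulRegular_X_none_mod_prefixIdeal_reesRelation a hreg i i.is_lt.le), ?_⟩
  rw [smul_eq_mul, Ideal.mul_top]
  exact (ofList_reesRelation_ne_top a).symm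
end

section
/- Let A be a commutative ring and let a₁, …, aₖ be a regular sequence generating the ideal I. Then for every n ≥ 0, the A/I-module Iⁿ/Iⁿ⁺¹ is a free module, with basis given by the residue classes of the monomials a₁^{α₁}⋯aₖ^{αₖ} where (α₁, …, αₖ) ranges over the k-tuples of natural numbers with α₁ + ⋯ + αₖ = n. -/
/-!
Regular sequences are quasi-regular: if `a₁, …, a_c` is regular and `J = (a₁, …, a_{c-1})`, we
show that a form `F` of degree `d` in `X₁, …, X_c` over `A` with `F(a) ∈ (J, a_c)^{d+1}` has all
its coefficients in `(J, a_c)`, assuming this for the shorter sequence. First, `a_c` is regular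
modulo every `J^d`: if `y = Q(a) ∈ J^d` and `a_c y ∈ J^{d+1}`, quasi-regularity of the shorter
sequence applied to `a_c Q` puts the coefficients of `Q` into `(J : a_c) = J`. Now split
`F = X_c H + G` with `G` free of `X_c`, and reduce to `F(a) = 0` by subtracting a form with
coefficients in `(J, a_c)` and the same value. Then `a_c H(a) = -G(a) ∈ J^d`, so `H(a) ∈ J^d`,
and induction on `d` handles `H`; writing `H(a) = P(a)` with `P` free of `X_c`, the form
`G + a_c P` vanishes at `a`, so the coefficients of `G` lie in `J + (a_c)`.
For the whole sequence this is the linear independence of the monomials of degree `n` in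
`Iⁿ/Iⁿ⁺¹` over `A/I`; that they span is clear.
-/

/-- The quotient `Iⁿ/Iⁿ⁺¹` of the submodule `Iⁿ ⊆ A` by `Iⁿ⁺¹`. -/
noncomputable abbrev powQuot (A : Type) [CommRing A] (I : Ideal A) (n : ℕ) :=
  ↥(I ^ n) ⧸ (Submodule.comap (I ^ n).subtype (I ^ (n + 1)))

/-- `Iⁿ/Iⁿ⁺¹` is a module over `A/I`. -/
noncomputable instance powQuotModule (A : Type) [CommRing A] (I : Ideal A) (n : ℕ) :
    Module (A ⧸ I) (powQuot A I n) :=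
  Module.IsTorsionBySet.module (I := I) (by
    intro x a
    obtain ⟨y, rfl⟩ := Submodule.Quotient.mk_surjective _ x
    rw [← Submodule.Quotient.mk_smul, Submodule.Quotient.mk_eq_zero, Submodule.mem_comap]
    show (a : A) • (y : A) ∈ I ^ (n + 1)
    rw [smul_eq_mul, pow_succ']
    exact Ideal.mul_mem_mul a.2 y.2)

open MvPolynomial

namespace MvPolynomial

variable {σ R : Type*} [CommSemiring R]

theorem mem_supported_iff_forall_support_subset {p : MvPolynomial σ R} {s : Set σ} :
    p ∈ supported R s ↔ ∀ d ∈ p.support, ↑d.support ⊆ s := by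
  simp only [mem_supported, Set.subset_def, Finset.mem_coe, mem_vars_iff_mem_support]
  grind

theorem eq_C_of_isHomogeneous_zero {p : MvPolynomial σ R} (hp : p.IsHomogeneous 0) :
    p = C (p.coeff 0) :=
  totalDegree_eq_zero_iff_eq_C.mp (totalDegree_zero_iff_isHomogeneous σ |>.mpr hp)

theorem exists_eq_X_mul_add {i : σ} {s : Set σ} {n : ℕ} {F : MvPolynomial σ R}
    (hF : F ∈ supported R (insert i s)) (hFn : F.IsHomogeneous (n + 1)) :
    ∃ H G, F = X i * H + G ∧ H ∈ supported R (insert i s) ∧ H.IsHomogeneous n ∧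
      G ∈ supported R s ∧ G.IsHomogeneous (n + 1) := by
  classical
  rw [mem_supported_iff_forall_support_subset] at hF
  set e : σ →₀ ℕ := Finsupp.single i 1
  have hG : ∀ d, (F.modMonomial e).coeff d ≠ 0 →
      (F.modMonomial e).coeff d = F.coeff d ∧ d i = 0 := by
    intro d hd
    by_cases hed : e ≤ d
    · exact absurd (coeff_modMonomial_of_le F hed) hd
    · exact ⟨coeff_modMonomial_of_not_le F hed, by simpa [e, Finsupp.single_le_iff] using hed⟩
  refine ⟨F.divMonomial e, F.modMonomial e, (divMonomial_add_modMonomial_single F i).symm,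
    mem_supported_iff_forall_support_subset.mpr fun d hd => ?_, fun d hd => ?_,
    mem_supported_iff_forall_support_subset.mpr fun d hd => ?_, fun d hd => ?_⟩
  · rw [mem_support_iff, coeff_divMonomial] at hd
    exact (Finset.coe_subset.mpr (Finsupp.support_mono le_add_self)).trans
      (hF _ (mem_support_iff.mpr hd))
  · rw [coeff_divMonomial] at hd
    have hdeg := hFn hd
    have he : Finsupp.weight 1 e = 1 := by simp [e, Finsupp.weight_apply]
    rw [map_add, he] at hdeg
    omega
  · obtain ⟨hGF, hdi⟩ := hG d (mem_support_iff.mp hd)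
    intro j hj
    refine (hF d (mem_support_iff.mpr (hGF ▸ mem_support_iff.mp hd)) hj).resolve_left ?_
    rintro rfl
    exact Finsupp.mem_support_iff.mp hj hdi
  · obtain ⟨hGF, -⟩ := hG d hd
    exact hFn (hGF ▸ hd)

end MvPolynomial

section QuasiRegular

variable {σ A : Type*} [CommRing A] (a : σ → A)

theorem span_range_pow_eq_map_homogeneousSubmodule (n : ℕ) :
    Ideal.span (Set.range a) ^ n = (homogeneousSubmodule σ A n).map (aeval a).toLinearMap := by
  rw [← homogeneousSubmodule_one_pow, Submodule.map_pow, homogeneousSubmodule_one_eq_span_X,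
    Submodule.map_span, ← Set.range_comp]
  congr
  ext
  simp

variable {a}

theorem prod_pow_mem_span_image_pow {S : Set σ} {t : Finset σ} (ht : ↑t ⊆ S) (e : σ → ℕ) :
    ∏ i ∈ t, a i ^ e i ∈ Ideal.span (a '' S) ^ ∑ i ∈ t, e i := by
  rw [← Finset.prod_pow_eq_pow_sum]
  exact Ideal.prod_mem_prod fun i hi =>
    Ideal.pow_mem_pow (Ideal.subset_span (Set.mem_image_of_mem a (ht hi))) _

theorem eval_mem_mul_span_image_pow {K : Ideal A} {S : Set σ} {n : ℕ} {F : MvPolynomial σ A}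
    (hF : F ∈ supported A S) (hFn : F.IsHomogeneous n) (hK : ∀ m, F.coeff m ∈ K) :
    eval a F ∈ K * Ideal.span (a '' S) ^ n := by
  rw [eval_eq]
  refine Ideal.sum_mem _ fun d hd => Ideal.mul_mem_mul (hK d) ?_
  rw [hFn.degree_eq_sum_deg_support hd]
  exact prod_pow_mem_span_image_pow (mem_supported_iff_forall_support_subset.mp hF d hd) d

theorem eval_mem_span_image_pow {S : Set σ} {n : ℕ} {F : MvPolynomial σ A}
    (hF : F ∈ supported A S) (hFn : F.IsHomogeneous n) :
    eval a F ∈ Ideal.span (a '' S) ^ n := by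
  simpa using eval_mem_mul_span_image_pow (K := ⊤) hF hFn fun _ => Submodule.mem_top

theorem exists_isHomogeneous_eval_eq_of_mem_span_image_pow {S : Set σ} {n : ℕ} {x : A}
    (hx : x ∈ Ideal.span (a '' S) ^ n) :
    ∃ F ∈ supported A S, F.IsHomogeneous n ∧ eval a F = x := by
  rw [Set.image_eq_range, span_range_pow_eq_map_homogeneousSubmodule] at hx
  obtain ⟨F, hF, rfl⟩ := hx
  refine ⟨rename ((↑) : S → σ) F, by rw [supported_eq_range_rename]; exact ⟨F, rfl⟩,
    hF.rename_isHomogeneous, ?_⟩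
  rw [eval_rename]
  rfl

theorem exists_isHomogeneous_eval_eq_of_mem_mul_span_image_pow {K : Ideal A} {S : Set σ}
    {n : ℕ} {x : A} (hx : x ∈ K * Ideal.span (a '' S) ^ n) :
    ∃ F ∈ supported A S, F.IsHomogeneous n ∧ (∀ m, F.coeff m ∈ K) ∧ eval a F = x := by
  induction hx using Submodule.mul_induction_on' with
  | mem_mul_mem r hr y hy =>
    obtain ⟨F, hF, hFn, rfl⟩ := exists_isHomogeneous_eval_eq_of_mem_span_image_pow hy
    refine ⟨C r * F, Subalgebra.mul_mem _ (Subalgebra.algebraMap_mem _ r) hF, hFn.C_mul r,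
      fun m => ?_, by simp⟩
    rw [coeff_C_mul]
    exact K.mul_mem_right _ hr
  | add x _ y _ hx hy =>
    obtain ⟨F, hF, hFn, hFK, rfl⟩ := hx
    obtain ⟨G, hG, hGn, hGK, rfl⟩ := hy
    exact ⟨F + G, add_mem hF hG, hFn.add hGn, fun m => by simpa using add_mem (hFK m) (hGK m),
      map_add _ _ _⟩

theorem coeff_mem_of_isHomogeneous_zero {J : Ideal A} {F : MvPolynomial σ A}
    (hFn : F.IsHomogeneous 0) (hF : eval a F ∈ J) (m : σ →₀ ℕ) : F.coeff m ∈ J := by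
  classical
  rw [eq_C_of_isHomogeneous_zero hFn, eval_C] at hF
  rw [eq_C_of_isHomogeneous_zero hFn, coeff_C]
  split_ifs
  exacts [hF, J.zero_mem]

variable (a) in
def IsQuasiRegularOn (S : Set σ) : Prop :=
  ∀ (n : ℕ) (F : MvPolynomial σ A), F ∈ supported A S → F.IsHomogeneous n →
    eval a F ∈ Ideal.span (a '' S) ^ (n + 1) → ∀ m, F.coeff m ∈ Ideal.span (a '' S)

theorem coeff_mem_of_eval_mem_pow_succ {S : Set σ} {n : ℕ}
    (hzero : ∀ F ∈ supported A S, F.IsHomogeneous n → eval a F = 0 →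
      ∀ m, F.coeff m ∈ Ideal.span (a '' S))
    (F : MvPolynomial σ A) (hF : F ∈ supported A S) (hFn : F.IsHomogeneous n)
    (hFe : eval a F ∈ Ideal.span (a '' S) ^ (n + 1)) (m : σ →₀ ℕ) :
    F.coeff m ∈ Ideal.span (a '' S) := by
  rw [pow_succ'] at hFe
  obtain ⟨P, hP, hPn, hPJ, hPF⟩ := exists_isHomogeneous_eval_eq_of_mem_mul_span_image_pow hFe
  have hFP := hzero (F - P) (sub_mem hF hP) (hFn.sub hPn) (by rw [map_sub, hPF, sub_self]) m
  rw [coeff_sub] at hFP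
  simpa using add_mem hFP (hPJ m)

theorem isQuasiRegularOn_empty : IsQuasiRegularOn a ∅ := by
  intro n F hF _ hFe m
  rw [supported_empty, Algebra.mem_bot] at hF
  obtain ⟨r, rfl⟩ := hF
  obtain rfl : r = 0 := by simpa using hFe
  simp

theorem IsQuasiRegularOn.mem_pow_of_mul_mem_pow {S : Set σ} (hS : IsQuasiRegularOn a S) {r : A}
    (hr : IsSMulRegular (A ⧸ Ideal.span (a '' S)) r) {n : ℕ} {y : A}
    (hy : r * y ∈ Ideal.span (a '' S) ^ n) : y ∈ Ideal.span (a '' S) ^ n := by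
  induction n with
  | zero => simp
  | succ n ih =>
    obtain ⟨Q, hQ, hQn, rfl⟩ := exists_isHomogeneous_eval_eq_of_mem_span_image_pow
      (ih (Ideal.pow_le_pow_right n.le_succ hy))
    have hrQ := hS n (C r * Q) (Subalgebra.mul_mem _ (Subalgebra.algebraMap_mem _ r) hQ)
      (hQn.C_mul r) (by simpa using hy)
    rw [pow_succ']
    exact eval_mem_mul_span_image_pow hQ hQn fun m =>
      mem_of_isSMulRegular_quotient_of_smul_mem hr (by simpa using hrQ m)

theorem isQuasiRegularOn_insert {S : Set σ} (hS : IsQuasiRegularOn a S) {i : σ}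
    (hi : IsSMulRegular (A ⧸ Ideal.span (a '' S)) (a i)) : IsQuasiRegularOn a (insert i S) := by
  classical
  have hJI : Ideal.span (a '' S) ≤ Ideal.span (a '' insert i S) :=
    Ideal.span_mono (Set.image_mono (Set.subset_insert i S))
  have hai : a i ∈ Ideal.span (a '' insert i S) :=
    Ideal.subset_span (Set.mem_image_of_mem a (Set.mem_insert i S))
  intro n
  induction n with
  | zero => exact fun F _ hFn hF => coeff_mem_of_isHomogeneous_zero hFn (by simpa using hF)
  | succ n ih =>
    refine coeff_mem_of_eval_mem_pow_succ fun F hF hFn hF0 => ?_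
    obtain ⟨H, G, rfl, hH, hHn, hG, hGn⟩ := exists_eq_X_mul_add hF hFn
    have hHJ : eval a H ∈ Ideal.span (a '' S) ^ (n + 1) := by
      refine hS.mem_pow_of_mul_mem_pow hi ?_
      rw [eq_neg_of_add_eq_zero_left (by simpa using hF0 : a i * eval a H + eval a G = 0)]
      exact neg_mem (eval_mem_span_image_pow hG hGn)
    have hHI := ih H hH hHn (Ideal.pow_right_mono hJI _ hHJ)
    obtain ⟨P, hP, hPn, hPH⟩ := exists_isHomogeneous_eval_eq_of_mem_span_image_pow hHJ
    have hGP := hS (n + 1) (G + C (a i) * P)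
      (add_mem hG (Subalgebra.mul_mem _ (Subalgebra.algebraMap_mem _ _) hP))
      (hGn.add (hPn.C_mul _))
      (by rw [show eval a (G + C (a i) * P) = 0 by simpa [hPH, add_comm] using hF0]
          exact zero_mem _)
    intro m
    rw [coeff_add, coeff_X_mul']
    refine add_mem ?_ ?_
    · split_ifs
      exacts [hHI _, zero_mem _]
    · have hGm : G.coeff m = (G + C (a i) * P).coeff m - a i * P.coeff m := by simp
      rw [hGm]
      exact sub_mem (hJI (hGP m)) (Ideal.mul_mem_right _ _ hai)

theorem span_image_setOf_lt_eq_ofList_take {k : ℕ} (a : Fin k → A) (c : ℕ) :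
    Ideal.span (a '' {j | (j : ℕ) < c}) = Ideal.ofList ((List.ofFn a).take c) := by
  unfold Ideal.ofList
  congr 1
  ext r
  simp only [Set.mem_image, Set.mem_ofPred_eq, List.mem_take_iff_getElem, List.getElem_ofFn,
    List.length_ofFn, lt_min_iff]
  exact ⟨fun ⟨j, hj, h⟩ => ⟨j, ⟨hj, j.2⟩, h⟩, fun ⟨j, ⟨hj, _⟩, h⟩ => ⟨_, hj, h⟩⟩

theorem isQuasiRegularOn_setOf_lt {k : ℕ} {a : Fin k → A}
    (ha : RingTheory.Sequence.IsWeaklyRegular A (List.ofFn a)) :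
    ∀ c ≤ k, IsQuasiRegularOn a {j | (j : ℕ) < c}
  | 0, _ => by simpa using isQuasiRegularOn_empty
  | c + 1, hc => by
    have hset : {j : Fin k | (j : ℕ) < c + 1} = insert ⟨c, hc⟩ {j : Fin k | (j : ℕ) < c} := by
      ext j
      simp only [Order.lt_add_one_iff, Set.mem_ofPred_eq, Set.mem_insert_iff, Fin.ext_iff]
      omega
    rw [hset]
    refine isQuasiRegularOn_insert (isQuasiRegularOn_setOf_lt ha c (by omega)) ?_
    have := ha.regular_mod_prev c (by simpa)
    rw [smul_eq_mul, Ideal.mul_top, ← span_image_setOf_lt_eq_ofList_take] at this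
    simpa using this

theorem isQuasiRegularOn_univ {k : ℕ} {a : Fin k → A}
    (ha : RingTheory.Sequence.IsWeaklyRegular A (List.ofFn a)) :
    IsQuasiRegularOn a Set.univ := by
  simpa using isQuasiRegularOn_setOf_lt ha k le_rfl

end QuasiRegular

section Basis

variable {A : Type} [CommRing A] {σ : Type*} [Fintype σ] (a : σ → A) (n : ℕ)

theorem prod_pow_mem_span_range_pow (α : {α : σ → ℕ // ∑ i, α i = n}) :
    ∏ i, a i ^ α.1 i ∈ Ideal.span (Set.range a) ^ n := by
  simpa [α.2] using prod_pow_mem_span_image_pow (a := a) (S := Set.univ) (t := Finset.univ)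
    (by simp) α.1

noncomputable def powQuotMonomial (α : {α : σ → ℕ // ∑ i, α i = n}) :
    powQuot A (Ideal.span (Set.range a)) n :=
  Submodule.Quotient.mk ⟨∏ i, a i ^ α.1 i, prod_pow_mem_span_range_pow a n α⟩

theorem powQuot_mk_smul {I : Ideal A} (r : A) (y : ↥(I ^ n)) :
    Ideal.Quotient.mk I r • (Submodule.Quotient.mk y : powQuot A I n) =
      Submodule.Quotient.mk (r • y) :=
  rfl

theorem span_range_powQuotMonomial :
    Submodule.span (A ⧸ Ideal.span (Set.range a)) (Set.range (powQuotMonomial a n)) = ⊤ := by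
  classical
  refine eq_top_iff.mpr fun x _ => ?_
  obtain ⟨⟨y, hy⟩, rfl⟩ := Submodule.Quotient.mk_surjective _ x
  obtain ⟨F, -, hFn, rfl⟩ :=
    exists_isHomogeneous_eval_eq_of_mem_span_image_pow (S := Set.univ) (by simpa using hy)
  have hdeg : ∀ d ∈ F.support, ∑ i, d i = n := fun d hd => by
    rw [← Finsupp.degree_eq_sum, Finsupp.degree_apply, hFn.degree_eq_sum_deg_support hd]
  have hF : (⟨eval a F, hy⟩ : ↥(Ideal.span (Set.range a) ^ n)) =
      ∑ d ∈ F.support.attach, F.coeff d.1 •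
        ⟨∏ i, a i ^ d.1 i, prod_pow_mem_span_range_pow a n ⟨d.1, hdeg d.1 d.2⟩⟩ := by
    ext
    simp [eval_eq', Finset.sum_attach F.support (fun d => F.coeff d * ∏ i, a i ^ d i)]
  rw [hF, ← Submodule.mkQ_apply, map_sum]
  exact Submodule.sum_mem _ fun d _ => by
    rw [Submodule.mkQ_apply, ← powQuot_mk_smul]
    exact Submodule.smul_mem _ _ (Submodule.subset_span ⟨⟨d.1, hdeg d.1 d.2⟩, rfl⟩)

theorem linearIndependent_powQuotMonomial (ha : IsQuasiRegularOn a Set.univ) :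
    LinearIndependent (A ⧸ Ideal.span (Set.range a)) (powQuotMonomial a n) := by
  classical
  rw [linearIndependent_iff']
  intro s g hg α hα
  obtain ⟨c, rfl⟩ := (Ideal.Quotient.mk_surjective (I := Ideal.span (Set.range a))).comp_left g
  set F : MvPolynomial σ A := ∑ β ∈ s, monomial (Finsupp.equivFunOnFinite.symm β.1) (c β)
  have hFn : F.IsHomogeneous n := IsHomogeneous.sum _ _ _ fun β _ =>
    isHomogeneous_monomial _ (by simp [Finsupp.degree_eq_sum, β.2])
  have hFe : eval a F ∈ Ideal.span (Set.range a) ^ (n + 1) := by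
    have hsum : (Submodule.Quotient.mk (∑ β ∈ s, c β •
        ⟨∏ i, a i ^ β.1 i, prod_pow_mem_span_range_pow a n β⟩) :
          powQuot A (Ideal.span (Set.range a)) n) = 0 := by
      rw [← Submodule.mkQ_apply, map_sum]
      exact hg
    rw [Submodule.Quotient.mk_eq_zero, Submodule.mem_comap] at hsum
    simpa [F, eval_monomial, Finsupp.prod_fintype] using hsum
  have := ha n F (by simp [supported_univ]) hFn (by simpa using hFe)
    (Finsupp.equivFunOnFinite.symm α.1)
  simpa [F, coeff_sum, coeff_monomial, Ideal.Quotient.eq_zero_iff_mem, Subtype.val_inj, hα]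
    using this

end Basis

/-- if `a₁, …, aₖ` is a regular sequence generating the ideal `I` of a
commutative ring `A`, then for every `n ≥ 0` the `A/I`-module `Iⁿ/Iⁿ⁺¹` is free, with basis
the residue classes of the monomials `a₁^{α₁}⋯aₖ^{αₖ}` for `(α₁, …, αₖ)` ranging over the
`k`-tuples of natural numbers with `α₁ + ⋯ + αₖ = n`. -/
theorem powQuot_basis_monomials
    (A : Type) [CommRing A] (k : ℕ) (a : Fin k → A)
    (ha : RingTheory.Sequence.IsRegular A (List.ofFn a))
    (I : Ideal A) (hI : I = Ideal.span (Set.range a)) (n : ℕ) :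
    ∃ b : Module.Basis { α : Fin k → ℕ // ∑ i, α i = n } (A ⧸ I) (powQuot A I n),
      ∀ α : { α : Fin k → ℕ // ∑ i, α i = n },
        b α = Submodule.Quotient.mk
          (⟨∏ i, a i ^ α.1 i, by
            have ha : ∀ i, a i ∈ I := fun i => hI ▸ Ideal.subset_span ⟨i, rfl⟩
            have h : ∏ i, a i ^ α.1 i ∈ ∏ i, I ^ α.1 i :=
              Ideal.prod_mem_prod fun i _ => Ideal.pow_mem_pow (ha i) _
            rwa [Finset.prod_pow_eq_pow_sum, α.2] at h⟩ : ↥(I ^ n)) := by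
  subst hI
  exact ⟨Module.Basis.mk (linearIndependent_powQuotMonomial a n
      (isQuasiRegularOn_univ ha.toIsWeaklyRegular)) (span_range_powQuotMonomial a n).ge,
    fun α => Module.Basis.mk_apply _ _ _⟩
end

section
/- Let F : C → D and G : D → C be functors between categories, and suppose F is left adjoint to G. If there exists a natural isomorphism from the identity functor of C to the composite G ∘ F (not assumed to be the unit of the adjunction), then F is fully faithful. -/
open CategoryTheory

/-- if `F ⊣ G` and there is *some* natural isomorphism `𝟭 C ≅ F ⋙ G` (not
assumed to be the unit of the adjunction), then `F` is fully faithful. -/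
theorem fullyFaithful_of_iso_id_comp
    {C : Type*} [Category C] {D : Type*} [Category D]
    (F : C ⥤ D) (G : D ⥤ C) (adj : F ⊣ G) (e : 𝟭 C ≅ F ⋙ G) :
    F.Full ∧ F.Faithful := by
  have h := adj.fullyFaithfulLOfCompIsoId e.symm
  exact ⟨h.full, h.faithful⟩
end

section
/- Let T(Δ) be the twisted arrow category of the simplex category Δ: its objects are morphisms θ : [n] → [m] of Δ, and a morphism from θ₁ : [n₁] → [m₁] to θ₂ : [n₂] → [m₂] is a pair of morphisms (α : [n₂] → [n₁], β : [m₁] → [m₂]) of Δ with β ∘ θ₁ ∘ α = θ₂. Let p : T(Δ) → Δ be the functor sending θ : [n] → [m] to [m] and (α, β) to β. Then p is an initial functor: for every object [m] of Δ, the comma category p/[m], whose objects are pairs of an object θ of T(Δ) and a morphism p(θ) → [m] in Δ, is connected. Consequently, limits of Δ-indexed diagrams are unchanged by precomposition with p. -/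
open CategoryTheory

/-- The twisted arrow category `T(Δ)` of the simplex category, realized as the category of
elements of the hom bifunctor `Δᵒᵖ × Δ ⥤ Type`: objects are morphisms `θ : [n] → [m]` of `Δ`,
and morphisms from `θ₁ : [n₁] → [m₁]` to `θ₂ : [n₂] → [m₂]` are pairs
`(α : [n₂] → [n₁], β : [m₁] → [m₂])` with `β ∘ θ₁ ∘ α = θ₂`. -/
abbrev TwistedArrowSimplex : Type :=
  (Functor.hom SimplexCategory).Elements

/-- The projection `p : T(Δ) ⥤ Δ` sending `θ : [n] → [m]` to `[m]` and `(α, β)` to `β`. -/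
def twistedArrowProj : TwistedArrowSimplex ⥤ SimplexCategory :=
  CategoryOfElements.π (Functor.hom SimplexCategory) ⋙
    CategoryTheory.Prod.snd SimplexCategoryᵒᵖ SimplexCategory

/-!
An object of `p/m` is an arrow `θ : n ⟶ k` together with `f : k ⟶ m`. The pair `(𝟙, f)` maps
it to `θ ≫ f : n ⟶ m` lying over `𝟙 m`, and the pair `(θ ≫ f, 𝟙)` maps the identity of `m` to
that same object, so every object is joined to `𝟙 m` by a zigzag of length two. This works in
any category, not only in `Δ`.
-/

namespace CategoryTheory

abbrev twistedArrowTarget (C : Type*) [Category C] : (Functor.hom C).Elements ⥤ C :=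
  CategoryOfElements.π (Functor.hom C) ⋙ Prod.snd Cᵒᵖ C

namespace twistedArrowTarget

variable {C : Type*} [Category C]

abbrev overMk {n k m : C} (θ : n ⟶ k) (f : k ⟶ m) : CostructuredArrow (twistedArrowTarget C) m :=
  CostructuredArrow.mk (Y := (Functor.hom C).elementsMk (.op n, k) θ) f

def postcompHom {n k m : C} (θ : n ⟶ k) (f : k ⟶ m) : overMk θ f ⟶ overMk (θ ≫ f) (𝟙 m) :=
  CostructuredArrow.homMk (CategoryOfElements.homMk _ _ (𝟙 _, f) (Category.id_comp (θ ≫ f)))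
    (Category.comp_id f)

def precompHom {n m : C} (φ : n ⟶ m) : overMk (𝟙 m) (𝟙 m) ⟶ overMk φ (𝟙 m) :=
  CostructuredArrow.homMk (CategoryOfElements.homMk _ _ (φ.op, 𝟙 m) (by
    change φ ≫ 𝟙 m ≫ 𝟙 m = φ
    simp)) (Category.comp_id _)

lemma zigzag_overMk_id {m : C} (X : CostructuredArrow (twistedArrowTarget C) m) :
    Zigzag X (overMk (𝟙 m) (𝟙 m)) := by
  obtain ⟨⟨⟨⟨n⟩, k⟩, θ⟩, ⟨⟨⟩⟩, f⟩ := X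
  change n ⟶ k at θ
  change k ⟶ m at f
  exact (Zigzag.of_hom (postcompHom θ f)).trans (Zigzag.of_inv (precompHom (θ ≫ f)))

end twistedArrowTarget

open twistedArrowTarget in
lemma isConnected_costructuredArrow_twistedArrowTarget {C : Type*} [Category C] (m : C) :
    IsConnected (CostructuredArrow (twistedArrowTarget C) m) :=
  have : Nonempty (CostructuredArrow (twistedArrowTarget C) m) := ⟨overMk (𝟙 m) (𝟙 m)⟩
  zigzag_isConnected fun X Y ↦ (zigzag_overMk_id X).trans (zigzag_overMk_id Y).symm

instance twistedArrowTarget_initial (C : Type*) [Category C] : (twistedArrowTarget C).Initial :=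
  ⟨isConnected_costructuredArrow_twistedArrowTarget⟩

end CategoryTheory

/-- the projection `p : T(Δ) ⥤ Δ` is an initial functor: for every object `[m]`
of `Δ` the comma category `p/[m]` is connected, and consequently limits of `Δ`-indexed
diagrams are unchanged by precomposition with `p`. -/
theorem twistedArrowProj_initial :
    (∀ m : SimplexCategory, IsConnected (CostructuredArrow twistedArrowProj m)) ∧
    twistedArrowProj.Initial := by
  exact ⟨isConnected_costructuredArrow_twistedArrowTarget, twistedArrowTarget_initial _⟩
end

section
/- Let k be a commutative ring, let M be a ℤ-graded k-module with decomposition M = ⨁_{e∈ℤ} M_e, and fix d ∈ ℤ. For n ≥ 0, let Pⁿ := M ⊗_k k[t₁^{±1}, …, tₙ^{±1}], the direct sum over pairs (e, (k₁,…,kₙ)) ∈ ℤ × ℤⁿ of copies of M_e, writing the element of M_e in position (k₁,…,kₙ) as b·t₁^{k₁}⋯tₙ^{kₙ}. Define k-linear maps ∂ⁿ : Pⁿ → Pⁿ⁺¹ by, for b ∈ M_e: ∂ⁿ(b·t₁^{k₁}⋯tₙ^{kₙ}) = b·t₁^{k₁}⋯tₙ^{kₙ}·t_{n+1}^{e−d}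 + Σ_{i=1}^{n} (−1)ⁱ · b·t₁^{k₁}⋯t_{n−i}^{k_{n−i}}·(t_{n+1−i}t_{n+2−i})^{k_{n+1−i}}·t_{n+3−i}^{k_{n+2−i}}⋯t_{n+1}^{kₙ} + (−1)^{n+1} · b·t₂^{k₁}⋯t_{n+1}^{kₙ}. Then ∂ⁿ⁺¹ ∘ ∂ⁿ = 0, and the resulting cochain complex P⁰ → P¹ → P² → ⋯ has cohomology H⁰ ≅ M_d and Hⁿ = 0 for all n ≥ 1. -/
open DirectSum

/-- The `n`-th term `Pⁿ = M ⊗ k[t₁^{±1},…,tₙ^{±1}]` of the twisted cochain complex: the direct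
sum over pairs `(e, (k₁,…,kₙ)) ∈ ℤ × ℤⁿ` of copies of `M_e`; the element of `M_e` in position
`κ = (k₁,…,kₙ)` is thought of as `b·t₁^{k₁}⋯tₙ^{kₙ}`. -/
abbrev TwistedCochain (k : Type) [CommRing k] (M : ℤ → Type)
    [∀ e, AddCommGroup (M e)] [∀ e, Module k (M e)] (n : ℕ) : Type :=
  ⨁ (p : ℤ × (Fin n → ℤ)), M p.1

/-- The differential `∂ⁿ : Pⁿ → Pⁿ⁺¹` of the twisted cochain complex: on `b·t₁^{k₁}⋯tₙ^{kₙ}`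
with `b ∈ M_e` it is the alternating sum of
 * `b·t₁^{k₁}⋯tₙ^{kₙ}·t_{n+1}^{e−d}` (appending the exponent `e − d`),
 * for `i = 1,…,n`, with sign `(−1)ⁱ`, the monomial obtained by duplicating the exponent at
   (1-indexed) position `n+1−i` (here realized as precomposition with `Fin.predAbove m` for
   the 0-indexed duplication position `m = n−i`, with sign `(−1)^{n−m}`), and
 * with sign `(−1)^{n+1}`, the shift `b·t₂^{k₁}⋯t_{n+1}^{kₙ}` (exponent `0` in position 1). -/
noncomputable def twistedDifferential (k : Type) [CommRing k] (M : ℤ → Type)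
    [∀ e, AddCommGroup (M e)] [∀ e, Module k (M e)] (d : ℤ) (n : ℕ) :
    TwistedCochain k M n →ₗ[k] TwistedCochain k M (n + 1) :=
  DirectSum.toModule k (ℤ × (Fin n → ℤ)) (TwistedCochain k M (n + 1)) fun p =>
    (DirectSum.lof k (ℤ × (Fin (n + 1) → ℤ)) (fun q => M q.1)
        (p.1, Fin.snoc p.2 (p.1 - d)))
      + (∑ m : Fin n, ((-1 : ℤ) ^ (n - (m : ℕ))) •
          DirectSum.lof k (ℤ × (Fin (n + 1) → ℤ)) (fun q => M q.1)
            (p.1, fun j => p.2 (m.predAbove j)))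
      + ((-1 : ℤ) ^ (n + 1)) •
          DirectSum.lof k (ℤ × (Fin (n + 1) → ℤ)) (fun q => M q.1)
            (p.1, Fin.cons 0 p.2)

/-!
Write the exponent vector of `b·t^κ`, `b ∈ M_e`, as the frame `(0, k₁, …, kₙ, e − d)`. Every term of
`∂ⁿ` duplicates one entry of the frame and drops its two ends, i.e. precomposes the frame with a
codegeneracy `Fin.predAbove i`; the cosimplicial identity `σ_comp_σ` then makes the terms of
`∂ⁿ⁺¹ ∘ ∂ⁿ` cancel in pairs. The contracting homotopy `σ` (drop the last exponent if it equals
`e − d`, else `0`) satisfies `σ∂ + ∂σ = id` in positive degrees and `σ∂ + ε π = id` in degree `0`,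
where `ε : M_d → P⁰` and `π : P⁰ → M_d` are the inclusion and projection of the summand `M_d`.
So the augmented complex `M_d → P⁰ → P¹ → ⋯` is exact.
-/

theorem LinearMap.ker_eq_range_of_contraction {R A B C : Type*} [Ring R] [AddCommGroup A]
    [Module R A] [AddCommGroup B] [Module R B] [AddCommGroup C] [Module R C]
    {f : A →ₗ[R] B} {g : B →ₗ[R] C} {s : B →ₗ[R] A} {t : C →ₗ[R] B}
    (hgf : g ∘ₗ f = 0) (hid : t ∘ₗ g + f ∘ₗ s = LinearMap.id) : ker g = range f := by
  refine le_antisymm (fun x hx => ⟨s x, ?_⟩) (LinearMap.range_le_ker_iff.mpr hgf)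
  simpa [LinearMap.mem_ker.mp hx] using LinearMap.congr_fun hid x

theorem sum_sum_neg_one_pow_smul_eq_zero_of_cosimplicial {A : Type*} [AddCommGroup A] {n : ℕ}
    (x : Fin (n + 2) → Fin (n + 3) → A)
    (hx : ∀ i j : Fin (n + 2), i ≤ j → x i j.succ = x j i.castSucc) :
    ∑ i : Fin (n + 2), ∑ j : Fin (n + 3), ((-1 : ℤ) ^ ((i : ℕ) + j)) • x i j = 0 := by
  rw [← Finset.sum_product']
  -- the term at `(i, j + 1)` with `i ≤ j` cancels the one at `(j, i)`
  refine Finset.sum_involution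
    (fun q _ => if h : (q.1 : ℕ) < q.2 then (⟨q.2 - 1, by omega⟩, ⟨q.1, by omega⟩)
      else (⟨q.2, by omega⟩, ⟨q.1 + 1, by omega⟩))
    (fun q _ => ?_) (fun q _ _ => ?_) (fun _ _ => Finset.mem_product.2 ⟨by simp, by simp⟩)
    (fun q _ => ?_)
  · obtain ⟨⟨i, hi⟩, ⟨j, hj⟩⟩ := q
    dsimp only at *
    split_ifs with h
    · obtain ⟨j, rfl⟩ : ∃ j' : ℕ, j = j' + 1 := ⟨j - 1, by omega⟩
      have := hx ⟨i, hi⟩ ⟨j, by omega⟩ (Fin.mk_le_mk.2 (by omega))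
      simp only [Fin.succ_mk, Fin.castSucc_mk] at this
      simp only [Nat.add_sub_cancel, this, ← add_smul]
      rw [show i + (j + 1) = j + i + 1 by omega, pow_succ]
      simp
    · have := hx ⟨j, by omega⟩ ⟨i, hi⟩ (Fin.mk_le_mk.2 (by omega))
      simp only [Fin.succ_mk, Fin.castSucc_mk] at this
      simp only [← this, ← add_smul]
      rw [show j + (i + 1) = i + j + 1 by omega, pow_succ]
      simp
  · obtain ⟨⟨i, hi⟩, ⟨j, hj⟩⟩ := q
    dsimp only at *
    split_ifs with h <;> simp [Prod.ext_iff] <;> omega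
  · obtain ⟨⟨i, hi⟩, ⟨j, hj⟩⟩ := q
    dsimp only at *
    split_ifs with h1 h2 h2 <;> simp [Prod.ext_iff, Fin.ext_iff] at h2 ⊢ <;> omega

namespace TwistedCochain

variable {n : ℕ}

def frame (c : ℤ) (κ : Fin n → ℤ) : Fin (n + 2) → ℤ :=
  Fin.cons 0 (Fin.snoc κ c)

/-- `coface (e - d) i κ` is the exponent vector of the term of sign `(-1)^(n+1-i)` in `∂ⁿ(b·t^κ)`:
`i = n + 1` appends `e − d`, `i = 0` is the shift. -/
def coface (c : ℤ) (i : Fin (n + 2)) (κ : Fin n → ℤ) : Fin (n + 1) → ℤ :=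
  fun j => frame c κ (i.predAbove j.castSucc.succ)

@[simp]
theorem frame_zero (c : ℤ) (κ : Fin n → ℤ) : frame c κ 0 = 0 := rfl

@[simp]
theorem frame_last (c : ℤ) (κ : Fin n → ℤ) : frame c κ (Fin.last (n + 1)) = c := by
  simp [frame, ← Fin.succ_last]

@[simp]
theorem frame_castSucc_succ (c : ℤ) (κ : Fin n → ℤ) (j : Fin n) :
    frame c κ j.castSucc.succ = κ j := by
  simp [frame]

@[simp]
theorem frame_castSucc_last (c : ℤ) (κ : Fin (n + 1) → ℤ) :
    frame c κ (Fin.last (n + 1)).castSucc = κ (Fin.last n) := by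
  rw [← Fin.succ_last, Fin.castSucc_succ, frame_castSucc_succ]

theorem frame_coface (c : ℤ) (i : Fin (n + 2)) (κ : Fin n → ℤ) :
    frame c (coface c i κ) = frame c κ ∘ i.predAbove := by
  funext m
  induction m using Fin.cases with
  | zero => simp
  | succ m =>
    induction m using Fin.lastCases with
    | last => simp [Fin.succ_last]
    | cast j => simp [coface]

theorem coface_castSucc_coface {c : ℤ} {i j : Fin (n + 2)} (hij : i ≤ j) (κ : Fin n → ℤ) :
    coface c i.castSucc (coface c j κ) = coface c j.succ (coface c i κ) := by
  funext m
  have hσ := congrArg (fun f => (SimplexCategory.Hom.toOrderHom f) m.castSucc.succ)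
    (SimplexCategory.σ_comp_σ hij)
  dsimp [SimplexCategory.σ] at hσ
  simp only [coface, frame_coface, Function.comp_apply]
  exact congrArg (frame c κ) hσ

theorem coface_zero (c : ℤ) (κ : Fin n → ℤ) : coface c 0 κ = Fin.cons 0 κ := by
  funext j
  induction j using Fin.cases with
  | zero => simp [coface]
  | succ j => simp [coface, frame]

theorem coface_last (c : ℤ) (κ : Fin n → ℤ) : coface c (Fin.last (n + 1)) κ = Fin.snoc κ c := by
  funext j
  induction j using Fin.lastCases with
  | last => simp [coface, ← Fin.castSucc_succ, Fin.succ_last]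
  | cast j =>
    simp only [coface, Fin.predAbove_last_apply, ← Fin.castSucc_succ, Fin.castPred_castSucc]
    simp

theorem coface_succ_castSucc (c : ℤ) (m : Fin n) (κ : Fin n → ℤ) :
    coface c m.castSucc.succ κ = fun j => κ (m.predAbove j) := by
  funext j
  simp [coface]

theorem coface_castSucc_last (c : ℤ) (i : Fin (n + 2)) (κ : Fin (n + 1) → ℤ) :
    coface c i.castSucc κ (Fin.last (n + 1)) = κ (Fin.last n) := by
  simp [coface, Fin.succ_castSucc]

theorem init_coface_castSucc {c : ℤ} (i : Fin (n + 2)) {κ : Fin (n + 1) → ℤ}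
    (hκ : κ (Fin.last n) = c) :
    Fin.init (coface c i.castSucc κ) = coface c i (Fin.init κ) := by
  have hframe : frame c (Fin.init κ) = frame c κ ∘ Fin.castSucc := by
    funext m
    induction m using Fin.cases with
    | zero => simp
    | succ m =>
      induction m using Fin.lastCases with
      | last => simp [Fin.succ_last, hκ]
      | cast j => simp [Fin.init]
  funext j
  simp [Fin.init, coface, hframe, ← Fin.castSucc_predAbove_castSucc]

section Monomial

variable (k : Type) [CommRing k] (M : ℤ → Type) [∀ e, AddCommGroup (M e)] [∀ e, Module k (M e)]

noncomputable def monomial (e : ℤ) (κ : Fin n → ℤ) : M e →ₗ[k] TwistedCochain k M n :=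
  lof k _ (fun q : ℤ × (Fin n → ℤ) => M q.1) (e, κ)

variable {k M}

theorem lof_eq_monomial (p : ℤ × (Fin n → ℤ)) :
    lof k _ (fun q : ℤ × (Fin n → ℤ) => M q.1) p = monomial k M p.1 p.2 :=
  rfl

theorem hom_ext {N : Type*} [AddCommGroup N] [Module k N] {f g : TwistedCochain k M n →ₗ[k] N}
    (h : ∀ e κ (b : M e), f (monomial k M e κ b) = g (monomial k M e κ b)) : f = g :=
  DirectSum.linearMap_ext k fun p => LinearMap.ext fun b => h p.1 p.2 b

variable (k M)

theorem component_comp_monomial (e : ℤ) (κ : Fin n → ℤ) :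
    component k _ (fun q : ℤ × (Fin n → ℤ) => M q.1) (e, κ) ∘ₗ monomial k M e κ = LinearMap.id :=
  LinearMap.ext fun b => component.lof_self k (M := fun q : ℤ × (Fin n → ℤ) => M q.1) (e, κ) b

end Monomial

end TwistedCochain

section Differential

open TwistedCochain

variable (k : Type) [CommRing k] (M : ℤ → Type) [∀ e, AddCommGroup (M e)] [∀ e, Module k (M e)]
  (d : ℤ)

theorem twistedDifferential_monomial {n : ℕ} (e : ℤ) (κ : Fin n → ℤ) (b : M e) :
    twistedDifferential k M d n (monomial k M e κ b) =
      ∑ i : Fin (n + 2), ((-1 : ℤ) ^ (i : ℕ)) • monomial k M e (coface (e - d) i.rev κ) b := by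
  have hnat : twistedDifferential k M d n (monomial k M e κ b) =
      ∑ i : Fin (n + 2), ((-1 : ℤ) ^ (n + 1 - i)) • monomial k M e (coface (e - d) i κ) b := by
    rw [monomial, twistedDifferential, toModule_lof, Fin.sum_univ_succ, Fin.sum_univ_castSucc]
    simp only [LinearMap.add_apply]
    erw [LinearMap.sum_apply]
    simp only [lof_eq_monomial, Fin.succ_last, LinearMap.smul_apply, Fin.val_zero, Fin.val_succ,
      Fin.val_last, Fin.val_castSucc, Nat.sub_zero, Nat.sub_self, pow_zero, one_smul,
      add_tsub_add_eq_tsub_right, coface_zero, coface_last, coface_succ_castSucc]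
    abel
  rw [hnat, ← Equiv.sum_comp Fin.revPerm]
  refine Finset.sum_congr rfl fun i _ => ?_
  simp only [Fin.revPerm_apply, Fin.val_rev]
  congr 2
  omega

theorem twistedDifferential_comp (n : ℕ) :
    twistedDifferential k M d (n + 1) ∘ₗ twistedDifferential k M d n = 0 := by
  refine hom_ext fun e κ b => ?_
  simp only [LinearMap.comp_apply, twistedDifferential_monomial, map_sum, map_zsmul,
    Finset.smul_sum, smul_smul, ← pow_add, LinearMap.zero_apply]
  refine sum_sum_neg_one_pow_smul_eq_zero_of_cosimplicial _ fun i j hij => ?_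
  rw [Fin.rev_succ, Fin.rev_castSucc, coface_castSucc_coface (Fin.rev_le_rev.2 hij)]

noncomputable def twistedContraction (n : ℕ) :
    TwistedCochain k M (n + 1) →ₗ[k] TwistedCochain k M n :=
  toModule k _ _ fun p =>
    if p.2 (Fin.last n) = p.1 - d then monomial k M p.1 (Fin.init p.2) else 0

theorem twistedContraction_monomial {n : ℕ} (e : ℤ) (κ : Fin (n + 1) → ℤ) (b : M e) :
    twistedContraction k M d n (monomial k M e κ b) =
      if κ (Fin.last n) = e - d then monomial k M e (Fin.init κ) b else 0 := by
  rw [twistedContraction, monomial, toModule_lof]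
  split_ifs <;> rfl

theorem twistedContraction_comp_add_comp (n : ℕ) :
    twistedContraction k M d (n + 1) ∘ₗ twistedDifferential k M d (n + 1) +
      twistedDifferential k M d n ∘ₗ twistedContraction k M d n = LinearMap.id := by
  refine hom_ext fun e κ b => ?_
  simp only [LinearMap.add_apply, LinearMap.comp_apply, LinearMap.id_apply,
    twistedDifferential_monomial, map_sum, map_zsmul, twistedContraction_monomial]
  rw [Fin.sum_univ_succ]
  simp only [Fin.rev_zero, Fin.rev_succ, coface_castSucc_last, coface_last, Fin.snoc_last,
    Fin.init_snoc, if_true, Fin.val_zero, pow_zero, one_smul, Fin.val_succ]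
  split_ifs with hκ
  · simp only [twistedDifferential_monomial, init_coface_castSucc _ hκ, pow_succ, mul_neg_one,
      neg_smul, Finset.sum_neg_distrib]
    abel
  · simp

theorem twistedDifferential_comp_monomial :
    twistedDifferential k M d 0 ∘ₗ monomial k M d ![] = 0 := by
  have h : coface 0 1 ![] = ![0] := by
    funext j
    fin_cases j
    rfl
  ext b
  simp [twistedDifferential_monomial, Fin.sum_univ_two, coface_zero, h]

theorem twistedContraction_comp_add_monomial_comp :
    twistedContraction k M d 0 ∘ₗ twistedDifferential k M d 0 +
      monomial k M d ![] ∘ₗ component k _ (fun q : ℤ × (Fin 0 → ℤ) => M q.1) (d, ![]) =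
        LinearMap.id := by
  refine hom_ext fun e κ b => ?_
  obtain rfl : κ = ![] := Subsingleton.elim _ _
  simp only [LinearMap.add_apply, LinearMap.comp_apply, LinearMap.id_apply,
    twistedDifferential_monomial, map_sum, map_zsmul, twistedContraction_monomial]
  have hinit : ∀ κ : Fin 1 → ℤ, Fin.init κ = ![] := fun _ => Subsingleton.elim _ _
  simp only [Fin.sum_univ_succ, Fin.sum_univ_zero, Fin.rev_zero, Fin.rev_succ, coface_last,
    Fin.last_zero, Fin.castSucc_zero, coface_zero, Fin.cons_zero, hinit]
  rcases eq_or_ne e d with rfl | he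
  · simp [monomial]
  · have : (0 : ℤ) ≠ e - d := by omega
    simp [this, monomial, component.of, he]

end Differential

/-- the maps `∂ⁿ` form a cochain complex (`∂ⁿ⁺¹ ∘ ∂ⁿ = 0`) whose cohomology is
`H⁰ ≅ M_d` and `Hⁿ = 0` for `n ≥ 1` (i.e. `ker ∂ⁿ⁺¹ = range ∂ⁿ` for all `n ≥ 0`). -/
theorem twistedCochain_cohomology (k : Type) [CommRing k] (M : ℤ → Type)
    [∀ e, AddCommGroup (M e)] [∀ e, Module k (M e)] (d : ℤ) :
    (∀ n : ℕ, (twistedDifferential k M d (n + 1)).comp (twistedDifferential k M d n) = 0) ∧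
    Nonempty ((LinearMap.ker (twistedDifferential k M d 0)) ≃ₗ[k] M d) ∧
    (∀ n : ℕ, LinearMap.ker (twistedDifferential k M d (n + 1))
      = LinearMap.range (twistedDifferential k M d n)) := by
  refine ⟨twistedDifferential_comp k M d, ⟨?_⟩, fun n =>
    LinearMap.ker_eq_range_of_contraction (twistedDifferential_comp k M d n)
      (twistedContraction_comp_add_comp k M d n)⟩
  have hker := LinearMap.ker_eq_range_of_contraction (twistedDifferential_comp_monomial k M d)
    (twistedContraction_comp_add_monomial_comp k M d)
  have hinj : Function.Injective (TwistedCochain.monomial k M d ![]) :=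
    LinearMap.injective_of_comp_eq_id _ _ (TwistedCochain.component_comp_monomial k M d ![])
  exact (LinearEquiv.ofEq _ _ hker).trans (LinearEquiv.ofInjective _ hinj).symm
end

section
/- Let A be a commutative ring and consider the polynomial ring A[s,u] in two variables, with the ℤ-valued weighted grading assigning weight 1 to s and weight −1 to u. Then the A-algebra homomorphism A[x] → A[s,u] sending x to s·u is injective, and its range is exactly the weighted-homogeneous component of degree 0 of A[s,u], i.e. the A-submodule spanned by the monomials sᵏuᵏ for k ≥ 0. -/
open MvPolynomial

private noncomputable def mk2 (k : ℕ) : Fin 2 →₀ ℕ :=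
  Finsupp.single 0 k + Finsupp.single 1 k

private lemma mk2_apply0 (k : ℕ) : mk2 k 0 = k := by simp [mk2]

private lemma mk2_inj : Function.Injective mk2 := fun a b h => by
  have := congrArg (fun f => f 0) h; simpa [mk2_apply0] using this

private lemma fin2_decomp (d : Fin 2 →₀ ℕ) :
    d = Finsupp.single 0 (d 0) + Finsupp.single 1 (d 1) := by
  ext a; fin_cases a <;> simp [Finsupp.single_apply]

private lemma weight_eval (d : Fin 2 →₀ ℕ) :
    Finsupp.weight (![1, -1] : Fin 2 → ℤ) d = (d 0 : ℤ) - (d 1 : ℤ) := by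
  conv_lhs => rw [fin2_decomp d]
  rw [map_add]
  simp [Finsupp.weight_apply, Finsupp.sum_single_index]
  ring

private lemma pow_eq (A : Type) [CommRing A] (k : ℕ) :
    (X 0 * X 1 : MvPolynomial (Fin 2) A) ^ k = monomial (mk2 k) 1 := by
  rw [mul_pow, X_pow_eq_monomial, X_pow_eq_monomial, monomial_mul, mk2, one_mul]

private lemma heval (A : Type) [CommRing A] (f : Polynomial A) :
    Polynomial.aeval (X 0 * X 1 : MvPolynomial (Fin 2) A) f
      = ∑ n ∈ f.support, monomial (mk2 n) (f.coeff n) := by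
  conv_lhs => rw [f.as_sum_support]
  rw [map_sum]
  refine Finset.sum_congr rfl fun n _ => ?_
  rw [Polynomial.aeval_monomial, pow_eq, algebraMap_eq, C_mul_monomial, mul_one]

private lemma coeff_heval (A : Type) [CommRing A] (f : Polynomial A) (k : ℕ) :
    coeff (mk2 k) (Polynomial.aeval (X 0 * X 1 : MvPolynomial (Fin 2) A) f)
      = f.coeff k := by
  rw [heval]
  rw [MvPolynomial.coeff_sum]
  rw [Finset.sum_congr rfl (fun n _ => coeff_monomial (mk2 k) (mk2 n) (f.coeff n))]
  have hc : ∀ n ∈ f.support, (if mk2 n = mk2 k then f.coeff n else 0)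
      = (if n = k then f.coeff n else 0) := fun n _ => by
    by_cases h : n = k <;> simp [h, mk2_inj.eq_iff]
  rw [Finset.sum_congr rfl hc, Finset.sum_ite_eq' f.support k f.coeff]
  split_ifs with h
  · rfl
  · simp [Polynomial.notMem_support_iff.mp h]


/-- for a commutative ring `A`, the `A`-algebra map `A[x] → A[s,u]`,
`x ↦ s·u` (here `s = X 0`, `u = X 1` in `MvPolynomial (Fin 2) A`), is injective, and its
range is exactly the component of weighted-homogeneous degree `0` for the ℤ-valued weights
`w(s) = 1`, `w(u) = −1` — i.e. the span of the monomials `sᵏuᵏ`. -/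
theorem range_aeval_su_eq_weighted_degree_zero (A : Type) [CommRing A] :
    Function.Injective
      (Polynomial.aeval (X 0 * X 1 : MvPolynomial (Fin 2) A) :
        Polynomial A →ₐ[A] MvPolynomial (Fin 2) A) ∧
    Set.range
      (Polynomial.aeval (X 0 * X 1 : MvPolynomial (Fin 2) A) :
        Polynomial A →ₐ[A] MvPolynomial (Fin 2) A)
      = { p : MvPolynomial (Fin 2) A | p.IsWeightedHomogeneous (![1, -1] : Fin 2 → ℤ) 0 } := by
  constructor
  · intro f g h
    ext k
    have := congrArg (coeff (mk2 k)) h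
    rwa [coeff_heval, coeff_heval] at this
  · ext p
    constructor
    · rintro ⟨f, rfl⟩
      have : (Polynomial.aeval (X 0 * X 1 : MvPolynomial (Fin 2) A) f)
          ∈ weightedHomogeneousSubmodule A (![1, -1] : Fin 2 → ℤ) 0 := by
        rw [heval]
        refine Submodule.sum_mem _ fun n _ => ?_
        rw [mem_weightedHomogeneousSubmodule]
        apply isWeightedHomogeneous_monomial
        rw [weight_eval]
        simp [mk2_apply0, mk2]
      exact this
    · intro hp
      refine ⟨∑ d ∈ p.support, Polynomial.monomial (d 0) (p.coeff d), ?_⟩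
      have key : ∀ d ∈ p.support, d = mk2 (d 0) := by
        intro d hd
        have h0 := hp (MvPolynomial.mem_support_iff.mp hd)
        rw [weight_eval] at h0
        have : d 0 = d 1 := by omega
        ext a; fin_cases a <;> simp [mk2, Finsupp.single_apply, this]
      rw [map_sum]
      conv_rhs => rw [p.as_sum]
      refine Finset.sum_congr rfl fun d hd => ?_
      rw [Polynomial.aeval_monomial, pow_eq, algebraMap_eq, C_mul_monomial, mul_one,
        ← key d hd]
end

section
/- Let Q be a commutative ring with a ℤ-grading 𝒬 and let s ∈ Q be a homogeneous element. Let K = {x ∈ Q : sⁿ·x = 0 for some n ≥ 1} be the s-power-torsion ideal. Then: (a) K is a homogeneous ideal of Q; (b) the image of s in the quotient ring Q/K is a non-zero-divisor; and (c) for every commutative ring Q', precomposition with the quotient map Q → Q/K gives a bijection from the set of ring homomorphisms g : Q/K → Q' such that g(image of s) is a non-zero-divisor of Q', onto the set of ring homomorphisms f : Q → Q' such that f(s) is a non-zero-divisor of Q'. -/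
/-!
Multiplication by the homogeneous element `sⁿ` of degree `n • d` shifts graded components by
`n • d`, so `sⁿ x = 0` kills every component of `x`. If `s (x mod K) = 0` then `sⁿ⁺¹ x = 0`, so
`x ∈ K`. A ring map `f` with `f s` a non-zero-divisor kills `K`, because `f s ^ n * f x = 0`;
hence `f` factors uniquely through `Q/K`.
-/

/-- The `s`-power-torsion ideal `K = {x : ∃ n ≥ 1, sⁿ·x = 0}` of a commutative ring. -/
noncomputable def powerTorsionIdeal (Q : Type) [CommRing Q] (s : Q) : Ideal Q where
  carrier := { x : Q | ∃ n : ℕ, 1 ≤ n ∧ s ^ n * x = 0 }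
  zero_mem' := ⟨1, le_refl 1, by simp⟩
  add_mem' := by
    rintro a b ⟨n, hn, ha⟩ ⟨m, hm, hb⟩
    refine ⟨n + m, le_trans hn (Nat.le_add_right n m), ?_⟩
    have h1 : s ^ (n + m) * a = 0 := by
      rw [pow_add, mul_comm (s ^ n), mul_assoc, ha, mul_zero]
    have h2 : s ^ (n + m) * b = 0 := by
      rw [pow_add, mul_assoc, hb, mul_zero]
    rw [mul_add, h1, h2, add_zero]
  smul_mem' := by
    rintro c x ⟨n, hn, hx⟩
    exact ⟨n, hn, by rw [smul_eq_mul, mul_left_comm, hx, mul_zero]⟩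

namespace powerTorsionIdeal

variable {Q : Type} [CommRing Q] {s : Q}

theorem isHomogeneous {ι σ : Type*} [DecidableEq ι] [AddLeftCancelMonoid ι] [SetLike σ Q]
    [AddSubmonoidClass σ Q] (𝒬 : ι → σ) [GradedRing 𝒬] (hs : SetLike.IsHomogeneousElem 𝒬 s) :
    (powerTorsionIdeal Q s).IsHomogeneous 𝒬 := by
  obtain ⟨d, hd⟩ := hs
  rintro i x ⟨n, hn, hsx⟩
  refine ⟨n, hn, ?_⟩
  have hcomp : (DirectSum.decompose 𝒬 (s ^ n * x) (n • d + i) : Q)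
      = s ^ n * (DirectSum.decompose 𝒬 x i : Q) :=
    DirectSum.coe_decompose_mul_add_of_left_mem 𝒬 (SetLike.pow_mem_graded n hd)
  rw [← hcomp, hsx, DirectSum.decompose_zero, DirectSum.zero_apply, ZeroMemClass.coe_zero]

theorem mk_mem_nonZeroDivisors (s : Q) :
    Ideal.Quotient.mk (powerTorsionIdeal Q s) s ∈ nonZeroDivisors (Q ⧸ powerTorsionIdeal Q s) := by
  rw [mem_nonZeroDivisors_iff_right]
  intro y hy
  obtain ⟨x, rfl⟩ := Ideal.Quotient.mk_surjective y
  rw [← map_mul, Ideal.Quotient.eq_zero_iff_mem] at hy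
  obtain ⟨n, -, hsx⟩ := hy
  rw [Ideal.Quotient.eq_zero_iff_mem]
  exact ⟨n + 1, Nat.le_add_left 1 n, by rwa [pow_succ, mul_assoc, mul_comm s x]⟩

theorem le_ker {Q' : Type*} [CommRing Q'] {f : Q →+* Q'} (hf : f s ∈ nonZeroDivisors Q') :
    powerTorsionIdeal Q s ≤ RingHom.ker f := by
  rintro x ⟨n, -, hsx⟩
  have hfx : f x * f s ^ n = 0 := by rw [← map_pow, ← map_mul, mul_comm, hsx, map_zero]
  exact mem_nonZeroDivisors_iff_right.1 (pow_mem hf n) _ hfx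

noncomputable def liftEquiv (s : Q) (Q' : Type*) [CommRing Q'] :
    { g : Q ⧸ powerTorsionIdeal Q s →+* Q' //
        g (Ideal.Quotient.mk (powerTorsionIdeal Q s) s) ∈ nonZeroDivisors Q' } ≃
      { f : Q →+* Q' // f s ∈ nonZeroDivisors Q' } where
  toFun g := ⟨g.1.comp (Ideal.Quotient.mk (powerTorsionIdeal Q s)), g.2⟩
  invFun f := ⟨Ideal.Quotient.lift _ f.1 (le_ker f.2), f.2⟩
  left_inv _ := Subtype.ext (Ideal.Quotient.ringHom_ext rfl)
  right_inv _ := rfl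

end powerTorsionIdeal

/-- for a ℤ-graded commutative ring `Q` and a homogeneous element `s`, with
`K` the `s`-power-torsion ideal: (a) `K` is homogeneous; (b) the image of `s` in `Q/K` is a
non-zero-divisor; (c) for every commutative ring `Q'`, precomposition with the quotient map
`Q → Q/K` is a bijection from the ring homomorphisms `Q/K → Q'` sending the image of `s` to a
non-zero-divisor onto the ring homomorphisms `Q → Q'` sending `s` to a non-zero-divisor. -/
theorem powerTorsionIdeal_regularization
    (Q : Type) [CommRing Q] (𝒬 : ℤ → AddSubgroup Q) [GradedRing 𝒬]
    (s : Q) (hs : SetLike.IsHomogeneousElem 𝒬 s) :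
    (powerTorsionIdeal Q s).IsHomogeneous 𝒬 ∧
    (Ideal.Quotient.mk (powerTorsionIdeal Q s) s
      ∈ nonZeroDivisors (Q ⧸ powerTorsionIdeal Q s)) ∧
    (∀ (Q' : Type) [CommRing Q'],
      Function.Bijective
        (fun g : { g : Q ⧸ powerTorsionIdeal Q s →+* Q' //
              g (Ideal.Quotient.mk (powerTorsionIdeal Q s) s) ∈ nonZeroDivisors Q' } =>
          (⟨g.1.comp (Ideal.Quotient.mk (powerTorsionIdeal Q s)), g.2⟩ :
            { f : Q →+* Q' // f s ∈ nonZeroDivisors Q' }))) :=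
  ⟨powerTorsionIdeal.isHomogeneous 𝒬 hs, powerTorsionIdeal.mk_mem_nonZeroDivisors s,
    fun Q' _ => (powerTorsionIdeal.liftEquiv s Q').bijective⟩
end
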